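/- arXiv:1905.07238 — 9 statements merged into one kernel-verified Lean document; each statement's English description precedes it below -/
import Mathlib

section
/- Let F be a field of characteristic p > 0, let θ be an iterative derivation on F, and let f ∈ F be an element that is not a constant of θ. Then there exists a unique d ∈ ℕ such that θ^{(p^d)}(f) ≠ 0 and θ^{(m)}(f) = 0 for every m ∈ ℕ that is not divisible by p^d. -/
/-- An *iterative derivation* on a commutative ring `R` is a ring homomorphism
`θ : R →+* R⟦T⟧` (here encoded as a function preserving `1`, `+`, `*`) such that
the coefficient of `T^0` in `θ r` is `r`, and
`θ⁽ⁱ⁾(θ⁽ʲ⁾ r) = (i+j).choose i • θ⁽ⁱ⁺ʲ⁾ r` for all `i j`. -/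
def IsIterativeDerivation {R : Type*} [CommRing R] (θ : R → PowerSeries R) : Prop :=
  θ 1 = 1 ∧ (∀ a b : R, θ (a + b) = θ a + θ b) ∧ (∀ a b : R, θ (a * b) = θ a * θ b) ∧
    (∀ r : R, PowerSeries.coeff 0 (θ r) = r) ∧
    ∀ i j : ℕ, ∀ r : R,
      PowerSeries.coeff i (θ (PowerSeries.coeff j (θ r))) =
        (i + j).choose i • PowerSeries.coeff (i + j) (θ r)

/-- `C(p^d * u, p^d) ≡ u mod p`. -/
lemma aux_choose_pow_mul (p : ℕ) (hp : p.Prime) (d u : ℕ) :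
    (p ^ d * u).choose (p ^ d) ≡ u [MOD p] := by
  haveI : Fact p.Prime := ⟨hp⟩
  induction d with
  | zero =>
      simp only [pow_zero, one_mul, Nat.choose_one_right]
      rfl
  | succ d ih =>
      have h := @Choose.choose_modEq_choose_mod_mul_choose_div_nat (p ^ (d+1) * u) (p ^ (d+1)) p _
      have h1 : p ^ (d+1) * u % p = 0 := by
        rw [pow_succ, mul_comm (p ^ d) p, mul_assoc, Nat.mul_mod_right]
      have h2 : p ^ (d+1) % p = 0 := by
        rw [pow_succ, Nat.mul_mod_left]
      have h3 : p ^ (d+1) * u / p = p ^ d * u := by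
        rw [pow_succ, mul_comm (p ^ d) p, mul_assoc, Nat.mul_div_cancel_left _ hp.pos]
      have h4 : p ^ (d+1) / p = p ^ d := by
        rw [pow_succ, Nat.mul_div_cancel _ hp.pos]
      rw [h1, h2, h3, h4, Nat.choose_self, one_mul] at h
      exact h.trans ih

/-- `C(m, m % p^d) ≡ 1 mod p`. -/
lemma aux_choose_mod_pow (p : ℕ) (hp : p.Prime) (d : ℕ) : ∀ m : ℕ,
    m.choose (m % p ^ d) ≡ 1 [MOD p] := by
  haveI : Fact p.Prime := ⟨hp⟩
  induction d with
  | zero => intro m; rw [pow_zero, Nat.mod_one, Nat.choose_zero_right]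
  | succ d ih =>
      intro m
      have h := @Choose.choose_modEq_choose_mod_mul_choose_div_nat m (m % p ^ (d+1)) p _
      have h1 : m % p ^ (d+1) % p = m % p :=
        Nat.mod_mod_of_dvd m (dvd_pow_self p (Nat.succ_ne_zero d))
      have h2 : m % p ^ (d+1) / p = m / p % p ^ d := by
        rw [pow_succ, mul_comm]
        exact Nat.mod_mul_right_div_self m p (p ^ d)
      rw [h1, h2, Nat.choose_self, one_mul] at h
      exact h.trans (ih (m / p))

theorem unique_power_of_p_for_nonconstant
    {F : Type*} [Field F] (p : ℕ) (hp : 0 < p) [CharP F p]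
    (θ : F → PowerSeries F) (hθ : IsIterativeDerivation θ)
    (f : F) (hf : θ f ≠ PowerSeries.C f) :
    ∃! d : ℕ, PowerSeries.coeff (p ^ d) (θ f) ≠ 0 ∧
      ∀ m : ℕ, ¬ (p ^ d ∣ m) → PowerSeries.coeff m (θ f) = 0 := by
  classical
  obtain ⟨h1, hadd, hmul, hc0, hiter⟩ := hθ
  have hp' : p.Prime := by
    rcases CharP.char_is_prime_or_zero F p with h | h
    · exact h
    · omega
  haveI : Fact p.Prime := ⟨hp'⟩
  have hθ0 : θ 0 = 0 := by
    have h := hadd 0 0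
    rw [add_zero] at h
    exact add_left_cancel (h.symm.trans (add_zero _).symm)
  -- existence of a nonzero index with nonzero coefficient
  have hex : ∃ n : ℕ, n ≠ 0 ∧ PowerSeries.coeff n (θ f) ≠ 0 := by
    by_contra h
    push_neg at h
    apply hf
    ext k
    rcases Nat.eq_zero_or_pos k with rfl | hk
    · simp [hc0 f]
    · rw [h k (by omega), PowerSeries.coeff_C, if_neg (by omega)]
  set n := Nat.find hex with hn_def
  obtain ⟨hn0, hncoef⟩ := Nat.find_spec hex
  have hmin : ∀ k : ℕ, k ≠ 0 → k < n → PowerSeries.coeff k (θ f) = 0 := by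
    intro k hk hkn
    have := Nat.find_min hex hkn
    push_neg at this
    exact this hk
  -- p divides C(n, i) for 0 < i < n
  have hdvd : ∀ i : ℕ, 0 < i → i < n → p ∣ n.choose i := by
    intro i hi hin
    have h := hiter i (n - i) f
    rw [hmin (n - i) (by omega) (by omega), hθ0, map_zero,
      Nat.add_sub_cancel' (le_of_lt hin), nsmul_eq_mul] at h
    have := (mul_eq_zero.mp h.symm).resolve_right hncoef
    exact (CharP.cast_eq_zero_iff F p _).mp this
  -- n is a power of p
  set d := padicValNat p n with hd_def
  set u := n / p ^ d with hu_def
  have hpd_dvd : p ^ d ∣ n := pow_padicValNat_dvd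
  have hnu : n = p ^ d * u := (Nat.mul_div_cancel' hpd_dvd).symm
  have hu_ndvd : ¬ p ∣ u := by
    intro hdu
    apply pow_succ_padicValNat_not_dvd (p := p) hn0
    show p ^ (d + 1) ∣ n
    rw [hnu, pow_succ]
    exact mul_dvd_mul dvd_rfl hdu
  have hu0 : u ≠ 0 := by
    intro h0
    rw [h0, mul_zero] at hnu
    exact hn0 hnu
  have hpdpos : 0 < p ^ d := Nat.pow_pos hp
  have hn_eq : n = p ^ d := by
    by_contra hne
    have hu1 : 1 < u := by
      by_contra h
      push_neg at h
      have h1' : u = 1 := Nat.le_antisymm h (Nat.one_le_iff_ne_zero.mpr hu0)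
      rw [h1', mul_one] at hnu
      exact hne hnu
    have hlt : p ^ d < n := by
      rw [hnu]
      nlinarith [hpdpos, hu1]
    have hP : p ∣ n.choose (p ^ d) := hdvd (p ^ d) hpdpos hlt
    have hmod : n.choose (p ^ d) ≡ u [MOD p] := by
      rw [hnu]; exact aux_choose_pow_mul p hp' d u
    exact hu_ndvd (Nat.modEq_zero_iff_dvd.mp (hmod.symm.trans (Nat.modEq_zero_iff_dvd.mpr hP)))
  -- the key vanishing property
  have hmain : ∀ m : ℕ, ¬ (p ^ d ∣ m) → PowerSeries.coeff m (θ f) = 0 := by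
    intro m hm
    set r := m % p ^ d with hr_def
    have hr0 : r ≠ 0 := fun h => hm (Nat.dvd_of_mod_eq_zero h)
    have hrlt : r < p ^ d := Nat.mod_lt m hpdpos
    have hrm : r ≤ m := Nat.mod_le m _
    have hcr : PowerSeries.coeff r (θ f) = 0 := hmin r hr0 (by omega)
    have h := hiter (m - r) r f
    rw [hcr, hθ0, map_zero, Nat.sub_add_cancel hrm, Nat.choose_symm hrm, nsmul_eq_mul] at h
    rcases mul_eq_zero.mp h.symm with h' | h'
    · exfalso
      have hdvd1 : p ∣ m.choose r := (CharP.cast_eq_zero_iff F p _).mp h'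
      have hmod : m.choose r ≡ 1 [MOD p] := aux_choose_mod_pow p hp' d m
      have h01 : (0 : ℕ) ≡ 1 [MOD p] := (Nat.modEq_zero_iff_dvd.mpr hdvd1).symm.trans hmod
      have := h01.symm
      unfold Nat.ModEq at this
      rw [Nat.zero_mod, Nat.mod_eq_of_lt hp'.one_lt] at this
      exact one_ne_zero this
    · exact h'
  have hcoef_pd : PowerSeries.coeff (p ^ d) (θ f) ≠ 0 := by rwa [← hn_eq]
  refine ⟨d, ⟨hcoef_pd, hmain⟩, ?_⟩
  rintro d' ⟨hd'1, hd'2⟩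
  have hdvd1 : p ^ d' ∣ p ^ d := by
    by_contra h
    exact hcoef_pd (hd'2 (p ^ d) h)
  have hdvd2 : p ^ d ∣ p ^ d' := by
    by_contra h
    exact hd'1 (hmain (p ^ d') h)
  exact Nat.pow_right_injective hp'.two_le (Nat.dvd_antisymm hdvd1 hdvd2)
end

section
/- Let F be a field of characteristic p > 0 and let θ be a non-trivial iterative derivation on F. Then there exists a unique d ∈ ℕ such that θ^{(p^d)} is not the zero map and θ^{(m)} is the zero map for every m ∈ ℕ that is not divisible by p^d. -/
private lemma lucas_aux1 (p : ℕ) [Fact p.Prime] :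
    ∀ d q k : ℕ, k < p ^ d → Nat.choose (q * p ^ d + k) k ≡ 1 [MOD p] := by
  intro d
  induction d with
  | zero =>
    intro q k hk
    have hk0 : k = 0 := by simpa using hk
    subst hk0
    simpa using Nat.ModEq.refl 1
  | succ d ih =>
    intro q k hk
    have hp0 : 0 < p := (Fact.out : p.Prime).pos
    have heq : q * p ^ (d + 1) + k = k + (q * p ^ d) * p := by ring
    have hmodeq : (q * p ^ (d + 1) + k) % p = k % p := by
      rw [heq, Nat.add_mul_mod_self_right]
    have hdiveq : (q * p ^ (d + 1) + k) / p = q * p ^ d + k / p := by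
      rw [heq, Nat.add_mul_div_right _ _ hp0, Nat.add_comm]
    have hlt : k / p < p ^ d := by
      rw [Nat.div_lt_iff_lt_mul hp0]
      rw [pow_succ] at hk; exact hk
    calc Nat.choose (q * p ^ (d + 1) + k) k
        ≡ Nat.choose ((q * p ^ (d + 1) + k) % p) (k % p) *
          Nat.choose ((q * p ^ (d + 1) + k) / p) (k / p) [MOD p] :=
          Choose.choose_modEq_choose_mod_mul_choose_div_nat
      _ = Nat.choose (q * p ^ d + k / p) (k / p) := by
          rw [hmodeq, hdiveq, Nat.choose_self, one_mul]
      _ ≡ 1 [MOD p] := ih q (k / p) hlt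

private lemma lucas_aux2 (p : ℕ) [Fact p.Prime] :
    ∀ d u : ℕ, Nat.choose (u * p ^ d) (p ^ d) ≡ u [MOD p] := by
  intro d
  induction d with
  | zero => intro u; simpa using Nat.ModEq.refl u
  | succ d ih =>
    intro u
    have hp0 : 0 < p := (Fact.out : p.Prime).pos
    have h1 : (u * p ^ (d + 1)) % p = 0 := by
      rw [pow_succ, ← mul_assoc, Nat.mul_mod_left]
    have h2 : (p ^ (d + 1)) % p = 0 := by
      rw [pow_succ, Nat.mul_mod_left]
    have h3 : (u * p ^ (d + 1)) / p = u * p ^ d := by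
      rw [pow_succ, ← mul_assoc, Nat.mul_div_cancel _ hp0]
    have h4 : (p ^ (d + 1)) / p = p ^ d := by
      rw [pow_succ, Nat.mul_div_cancel _ hp0]
    calc Nat.choose (u * p ^ (d + 1)) (p ^ (d + 1))
        ≡ Nat.choose ((u * p ^ (d + 1)) % p) ((p ^ (d + 1)) % p) *
          Nat.choose ((u * p ^ (d + 1)) / p) ((p ^ (d + 1)) / p) [MOD p] :=
          Choose.choose_modEq_choose_mod_mul_choose_div_nat
      _ = Nat.choose (u * p ^ d) (p ^ d) := by
          rw [h1, h2, h3, h4]; simp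
      _ ≡ u [MOD p] := ih u

theorem unique_power_of_p_for_nontrivial
    {F : Type*} [Field F] (p : ℕ) (hp : 0 < p) [CharP F p]
    (θ : F → PowerSeries F) (hθ : IsIterativeDerivation θ)
    (hnt : ∃ f : F, θ f ≠ PowerSeries.C f) :
    ∃! d : ℕ, (∃ f : F, PowerSeries.coeff (p ^ d) (θ f) ≠ 0) ∧
      ∀ m : ℕ, ¬ (p ^ d ∣ m) → ∀ f : F, PowerSeries.coeff m (θ f) = 0 := by
  classical
  obtain ⟨h1, hadd, hmul, h0, hiter⟩ := hθ
  have hprime : p.Prime := (CharP.char_is_prime_or_zero F p).resolve_right (by omega)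
  haveI : Fact p.Prime := ⟨hprime⟩
  -- nontriviality gives a positive index with nonzero coefficient
  have hex : ∃ n, 0 < n ∧ ∃ f, PowerSeries.coeff n (θ f) ≠ 0 := by
    obtain ⟨f, hf⟩ := hnt
    by_contra hcon
    push_neg at hcon
    apply hf
    ext n
    rcases Nat.eq_zero_or_pos n with h | h
    · subst h; simp [h0 f]
    · rw [PowerSeries.coeff_C]
      simp only [h.ne', if_false]
      exact hcon n h f
  set e := Nat.find hex with he_def
  obtain ⟨hepos, hee⟩ := Nat.find_spec hex
  have hmin : ∀ k, 0 < k → k < e → ∀ f, PowerSeries.coeff k (θ f) = 0 := by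
    intro k hk hke f
    by_contra h
    exact (Nat.find_min hex hke) ⟨hk, f, h⟩
  -- descent lemma
  have descend : ∀ m k : ℕ, k ≤ m → ((m.choose k : F) ≠ 0) →
      (∃ f, PowerSeries.coeff m (θ f) ≠ 0) →
      ∃ g, PowerSeries.coeff k (θ g) ≠ 0 := by
    rintro m k hkm hc ⟨f, hf⟩
    refine ⟨PowerSeries.coeff (m - k) (θ f), ?_⟩
    have h := hiter k (m - k) f
    rw [Nat.add_sub_cancel' hkm] at h
    rw [h, nsmul_eq_mul]
    exact mul_ne_zero hc hf
  set d := e.factorization p with hd_def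
  have hdvd : p ^ d ∣ e := Nat.ordProj_dvd e p
  have hpdpos : 0 < p ^ d := pow_pos hprime.pos d
  have hu : e = (e / p ^ d) * p ^ d := (Nat.div_mul_cancel hdvd).symm
  have hupos : 0 < e / p ^ d := Nat.div_pos (Nat.le_of_dvd hepos hdvd) hpdpos
  have hund : ¬ p ∣ e / p ^ d := Nat.not_dvd_ordCompl hprime hepos.ne'
  have hu1 : e / p ^ d = 1 := by
    by_contra hne
    have h2 : 2 ≤ e / p ^ d := by omega
    have hmod : Nat.choose e (p ^ d) ≡ e / p ^ d [MOD p] := by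
      conv_lhs => rw [hu]
      exact lucas_aux2 p d _
    have hnd : ¬ p ∣ Nat.choose e (p ^ d) := by
      intro hdv
      have ha : Nat.choose e (p ^ d) % p = (e / p ^ d) % p := hmod
      have hb : Nat.choose e (p ^ d) % p = 0 := Nat.dvd_iff_mod_eq_zero.mp hdv
      have hc : (e / p ^ d) % p ≠ 0 := fun hz => hund (Nat.dvd_iff_mod_eq_zero.mpr hz)
      omega
    have hcF : ((Nat.choose e (p ^ d) : F)) ≠ 0 := fun h =>
      hnd ((CharP.cast_eq_zero_iff F p _).mp h)
    have hlt : p ^ d < e := by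
      nlinarith [hu, h2, hpdpos]
    obtain ⟨g, hg⟩ := descend e (p ^ d) hlt.le hcF hee
    exact hg (hmin (p ^ d) hpdpos hlt g)
  have he_pow : e = p ^ d := by rw [hu, hu1, one_mul]
  have hvanish : ∀ m : ℕ, ¬ p ^ d ∣ m → ∀ f, PowerSeries.coeff m (θ f) = 0 := by
    intro m hm f
    by_contra h
    set k := m % (p ^ d) with hk_def
    have hk0 : k ≠ 0 := fun h0 => hm (Nat.dvd_iff_mod_eq_zero.mpr h0)
    have hklt : k < p ^ d := Nat.mod_lt _ hpdpos
    have hkm : k ≤ m := Nat.mod_le _ _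
    have hmod : Nat.choose m k ≡ 1 [MOD p] := by
      have hh := lucas_aux1 p d (m / p ^ d) k hklt
      rwa [Nat.div_add_mod' m (p ^ d)] at hh
    have hnd : ¬ p ∣ Nat.choose m k := by
      intro hdv
      have ha : Nat.choose m k % p = 1 % p := hmod
      have hb : (1 : ℕ) % p = 1 := Nat.mod_eq_of_lt hprime.one_lt
      have hc : Nat.choose m k % p = 0 := Nat.dvd_iff_mod_eq_zero.mp hdv
      omega
    have hcF : ((Nat.choose m k : F)) ≠ 0 := fun hz =>
      hnd ((CharP.cast_eq_zero_iff F p _).mp hz)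
    obtain ⟨g, hg⟩ := descend m k hkm hcF ⟨f, h⟩
    have : k < e := he_pow ▸ hklt
    exact hg (hmin k (Nat.pos_of_ne_zero hk0) this g)
  have hee2 : ∃ f, PowerSeries.coeff (p ^ d) (θ f) ≠ 0 := by
    rw [← he_pow]; exact hee
  refine ⟨d, ⟨hee2, hvanish⟩, ?_⟩
  rintro d' ⟨⟨f', hf'⟩, hvan'⟩
  have hd1 : p ^ d ∣ p ^ d' := by
    by_contra h
    exact hf' (hvanish _ h f')
  have hd2 : p ^ d' ∣ p ^ d := by
    by_contra h
    obtain ⟨f0, hf0⟩ := hee2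
    exact hf0 (hvan' _ h f0)
  have hpp : p ^ d' = p ^ d := Nat.dvd_antisymm hd2 hd1
  exact Nat.pow_right_injective hprime.two_le hpp
end

section
/- Let F be a field of characteristic p > 0 with an iterative derivation θ, and let L be a separable algebraic field extension of F. Then there exists a unique iterative derivation θ_L on L extending θ, i.e. satisfying θ_L(algebraMap F L f) = PowerSeries.map (algebraMap F L) (θ f) for all f ∈ F. -/
set_option synthInstance.maxHeartbeats 1000000
set_option maxHeartbeats 2000000

open PowerSeries

namespace IterExt

universe u

/-- Coefficients below `n` of elements of `(ker constantCoeff)^n` vanish. -/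
lemma coeff_eq_zero_of_mem_pow {R : Type*} [CommRing R] {n : ℕ} {f : PowerSeries R}
    (hf : f ∈ (RingHom.ker (PowerSeries.constantCoeff (R := R))) ^ n) :
    ∀ k < n, PowerSeries.coeff k f = 0 := by
  induction n generalizing f with
  | zero => exact fun k hk => absurd hk (Nat.not_lt_zero k)
  | succ n ih =>
    rw [pow_succ] at hf
    refine Submodule.mul_induction_on hf ?_ ?_
    · intro a ha b hb k hk
      rw [PowerSeries.coeff_mul]
      refine Finset.sum_eq_zero fun p hp => ?_
      rw [Finset.HasAntidiagonal.mem_antidiagonal] at hp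
      rcases Nat.eq_zero_or_pos p.2 with h2 | h2
      · have : PowerSeries.coeff p.2 b = 0 := by
          rw [h2, PowerSeries.coeff_zero_eq_constantCoeff]; exact hb
        rw [this, mul_zero]
      · have hp1 : p.1 < n := by omega
        rw [ih ha p.1 hp1, zero_mul]
    · intro x y hx hy k hk
      rw [map_add, hx k hk, hy k hk, add_zero]

lemma eq_zero_of_forall_mem_pow {R : Type*} [CommRing R] {f : PowerSeries R}
    (hf : ∀ n, f ∈ (RingHom.ker (PowerSeries.constantCoeff (R := R))) ^ n) : f = 0 := by
  ext k
  simpa using coeff_eq_zero_of_mem_pow (hf (k + 1)) k (Nat.lt_succ_self k)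

/-- Two-variable version. -/
lemma coeff_coeff_eq_zero_of_mem_pow {R : Type*} [CommRing R] {n : ℕ}
    {f : PowerSeries (PowerSeries R)}
    (hf : f ∈ (RingHom.ker ((PowerSeries.constantCoeff (R := R)).comp
      (PowerSeries.constantCoeff (R := (PowerSeries R))))) ^ n) :
    ∀ i j : ℕ, i + j < n → PowerSeries.coeff j (PowerSeries.coeff i f) = 0 := by
  induction n generalizing f with
  | zero => exact fun i j hij => absurd hij (Nat.not_lt_zero _)
  | succ n ih =>
    rw [pow_succ] at hf
    refine Submodule.mul_induction_on hf ?_ ?_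
    · intro a ha b hb i j hij
      rw [PowerSeries.coeff_mul, map_sum]
      refine Finset.sum_eq_zero fun p hp => ?_
      rw [Finset.HasAntidiagonal.mem_antidiagonal] at hp
      rw [PowerSeries.coeff_mul]
      refine Finset.sum_eq_zero fun q hq => ?_
      rw [Finset.HasAntidiagonal.mem_antidiagonal] at hq
      rcases Nat.eq_zero_or_pos (p.2 + q.2) with h2 | h2
      · have hb0 : PowerSeries.coeff q.2 (PowerSeries.coeff p.2 b) = 0 := by
          have h3 : p.2 = 0 ∧ q.2 = 0 := by omega
          rw [h3.1, h3.2]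
          simpa [RingHom.mem_ker] using hb
        rw [hb0, mul_zero]
      · have : p.1 + q.1 < n := by omega
        rw [ih ha p.1 q.1 this, zero_mul]
    · intro x y hx hy i j hij
      rw [map_add, map_add, hx i j hij, hy i j hij, add_zero]

lemma eq_zero_of_forall_mem_pow₂ {R : Type*} [CommRing R] {f : PowerSeries (PowerSeries R)}
    (hf : ∀ n, f ∈ (RingHom.ker ((PowerSeries.constantCoeff (R := R)).comp
      (PowerSeries.constantCoeff (R := (PowerSeries R))))) ^ n) : f = 0 := by
  refine PowerSeries.ext fun i => PowerSeries.ext fun j => ?_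
  simpa using coeff_coeff_eq_zero_of_mem_pow (hf (i + j + 1)) i j (Nat.lt_succ_self _)

variable {R : Type*} [CommRing R]

/-- coefficient description of the "Taylor shift" `X ↦ X + Y`. -/
noncomputable def shiftFun (h : PowerSeries R) : PowerSeries (PowerSeries R) :=
  PowerSeries.mk fun i => PowerSeries.mk fun j =>
    ((i + j).choose i) • PowerSeries.coeff (i + j) h

lemma coeff_shiftFun (h : PowerSeries R) (i j : ℕ) :
    PowerSeries.coeff j (PowerSeries.coeff i (shiftFun h)) =
      ((i + j).choose i) • PowerSeries.coeff (i + j) h := by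
  simp [shiftFun]

lemma coeff_shiftFun_eq_hasseDeriv (h : PowerSeries R) (i j M : ℕ) (hM : i + j < M) :
    PowerSeries.coeff j (PowerSeries.coeff i (shiftFun h)) =
      (Polynomial.hasseDeriv i (PowerSeries.trunc M h)).coeff j := by
  rw [coeff_shiftFun, Polynomial.hasseDeriv_coeff, PowerSeries.coeff_trunc,
    if_pos (by omega : j + i < M), add_comm j i, nsmul_eq_mul]


lemma shiftFun_mul (a b : PowerSeries R) :
    shiftFun (a * b) = shiftFun a * shiftFun b := by
  refine PowerSeries.ext fun i => PowerSeries.ext fun j => ?_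
  set M := i + j + 1 with hMdef
  rw [coeff_shiftFun_eq_hasseDeriv (a * b) i j M (by omega)]
  have htr : PowerSeries.trunc M (a * b) =
      PowerSeries.trunc M (((PowerSeries.trunc M a : Polynomial R) : PowerSeries R) *
        ((PowerSeries.trunc M b : Polynomial R) : PowerSeries R)) :=
    (PowerSeries.trunc_trunc_mul_trunc (f := a) (g := b)).symm
  have hcoeffP : ∀ k, k < M → (PowerSeries.trunc M (a*b)).coeff k =
      ((PowerSeries.trunc M a) * (PowerSeries.trunc M b)).coeff k := by
    intro k hk
    rw [htr, PowerSeries.coeff_trunc, if_pos hk, ← Polynomial.coeff_coe,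
      Polynomial.coe_mul]
  rw [Polynomial.hasseDeriv_coeff, hcoeffP (j + i) (by omega), ← Polynomial.hasseDeriv_coeff,
    Polynomial.hasseDeriv_mul]
  rw [Polynomial.finset_sum_coeff, PowerSeries.coeff_mul, map_sum]
  refine Finset.sum_congr rfl fun p hp => ?_
  rw [Finset.HasAntidiagonal.mem_antidiagonal] at hp
  rw [Polynomial.coeff_mul, PowerSeries.coeff_mul]
  refine Finset.sum_congr rfl fun q hq => ?_
  rw [Finset.HasAntidiagonal.mem_antidiagonal] at hq
  rw [coeff_shiftFun_eq_hasseDeriv a p.1 q.1 M (by omega),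
    coeff_shiftFun_eq_hasseDeriv b p.2 q.2 M (by omega)]

lemma shiftFun_one : shiftFun (1 : PowerSeries R) = 1 := by
  refine PowerSeries.ext fun i => PowerSeries.ext fun j => ?_
  rw [coeff_shiftFun]
  rcases Nat.eq_zero_or_pos i with hi | hi
  · rcases Nat.eq_zero_or_pos j with hj | hj
    · subst hi; subst hj; simp
    · subst hi; simp [PowerSeries.coeff_one, hj.ne']
  · simp [PowerSeries.coeff_one, hi.ne', (by omega : i + j ≠ 0)]

lemma shiftFun_add (a b : PowerSeries R) : shiftFun (a + b) = shiftFun a + shiftFun b := by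
  refine PowerSeries.ext fun i => PowerSeries.ext fun j => ?_
  simp [coeff_shiftFun, smul_add]

/-- The Taylor-shift `X ↦ X + Y` ring homomorphism on power series. -/
noncomputable def shiftHom : PowerSeries R →+* PowerSeries (PowerSeries R) where
  toFun := shiftFun
  map_one' := shiftFun_one
  map_mul' := shiftFun_mul
  map_zero' := by
    refine PowerSeries.ext fun i => PowerSeries.ext fun j => ?_
    simp [coeff_shiftFun]
  map_add' := shiftFun_add

lemma coeff_shiftHom {R : Type*} [CommRing R] (h : PowerSeries R) (i j : ℕ) :
    PowerSeries.coeff j (PowerSeries.coeff i (shiftHom h)) =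
      ((i + j).choose i) • PowerSeries.coeff (i + j) h :=
  coeff_shiftFun h i j

/-- Uniqueness of lifts into a ring Hausdorff w.r.t. powers of an ideal,
for formally unramified algebras. -/
lemma alghom_ext {K L B : Type*} [CommRing K] [CommRing L] [CommRing B]
    [Algebra K L] [Algebra K B] [Algebra.FormallyUnramified K L]
    (I : Ideal B) (hH : ∀ x : B, (∀ n : ℕ, x ∈ I ^ n) → x = 0)
    (g₁ g₂ : L →ₐ[K] B) (h : ∀ x, g₁ x - g₂ x ∈ I) : g₁ = g₂ := by
  have key : ∀ (n : ℕ) (x : L), g₁ x - g₂ x ∈ I ^ n := by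
    intro n x
    have hnil : IsNilpotent (I.map (Ideal.Quotient.mk (I ^ n))) := by
      refine ⟨n, ?_⟩
      rw [← Ideal.map_pow, Ideal.map_quotient_self]
      rfl
    have heq : (Ideal.Quotient.mkₐ K (I ^ n)).comp g₁ =
        (Ideal.Quotient.mkₐ K (I ^ n)).comp g₂ := by
      refine Algebra.FormallyUnramified.ext _ hnil fun y => ?_
      rw [Ideal.Quotient.eq]
      simp only [AlgHom.coe_comp, Function.comp_apply, Ideal.Quotient.mkₐ_eq_mk]
      rw [← map_sub]
      exact Ideal.mem_map_of_mem _ (h y)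
    have := congrArg (fun g => g x) heq
    simp only [AlgHom.coe_comp, Function.comp_apply, Ideal.Quotient.mkₐ_eq_mk] at this
    rwa [← sub_eq_zero, ← map_sub, Ideal.Quotient.eq_zero_iff_mem] at this
  ext x
  exact sub_eq_zero.mp (hH (g₁ x - g₂ x) (fun n => key n x))

lemma exists_lift_powerSeries {K L : Type u} [Field K] [Field L] [Algebra K L]
    [Algebra.FormallySmooth K L] [Algebra.FormallyUnramified K L]
    (φ : K →+* PowerSeries L)
    (hφ : ∀ k, PowerSeries.constantCoeff (R := L) (φ k) = algebraMap K L k) :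
    ∃ g : L →+* PowerSeries L, (∀ x, PowerSeries.constantCoeff (R := L) (g x) = x) ∧
      ∀ k, g (algebraMap K L k) = φ k := by
  classical
  letI : Algebra K (PowerSeries L) := φ.toAlgebra
  set I : Ideal (PowerSeries L) := RingHom.ker (constantCoeff (R := L)) with hI
  have halg : ∀ k, algebraMap K (PowerSeries L) k = φ k := fun _ => rfl
  have hmemI : ∀ f : PowerSeries L, constantCoeff (R := L) f = 0 → f ∈ I := fun f h => h
  have hmemI' : ∀ f : PowerSeries L, f ∈ I → constantCoeff (R := L) f = 0 := fun f h => h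
  -- the base algebra morphism to `B ⧸ I`
  let e₀ : L →ₐ[K] (PowerSeries L ⧸ I) :=
    { toRingHom := (Ideal.Quotient.mk I).comp (PowerSeries.C (R := L))
      commutes' := fun k => by
        show Ideal.Quotient.mk I (PowerSeries.C (R := L) (algebraMap K L k)) = algebraMap K _ k
        have h2 : algebraMap K (PowerSeries L ⧸ I) k = Ideal.Quotient.mk I (φ k) := rfl
        rw [h2, Ideal.Quotient.eq]
        refine hmemI _ ?_
        rw [map_sub, hφ k, PowerSeries.constantCoeff_C, sub_self] }
  have hle : ∀ n : ℕ, I ^ (n + 1) ≤ I := fun n => Ideal.pow_le_self (Nat.succ_ne_zero n)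
  have hnil : ∀ n : ℕ, IsNilpotent (I.map (Ideal.Quotient.mk (I ^ (n + 1)))) := by
    intro n
    refine ⟨n + 1, ?_⟩
    rw [← Ideal.map_pow, Ideal.map_quotient_self]
    rfl
  -- the lifts mod `I ^ (n+1)`
  let τ : ∀ n : ℕ, L →ₐ[K] (PowerSeries L ⧸ I ^ (n + 1)) ⧸
      (I.map (Ideal.Quotient.mk (I ^ (n + 1)))) := fun n =>
    { toRingHom :=
        ((DoubleQuot.quotQuotEquivQuotOfLE (hle n)).symm : PowerSeries L ⧸ I →+* _).comp
          e₀.toRingHom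
      commutes' := fun k => by
        show (DoubleQuot.quotQuotEquivQuotOfLE (hle n)).symm (e₀ (algebraMap K L k)) = _
        rw [e₀.commutes]
        show (DoubleQuot.quotQuotEquivQuotOfLE (hle n)).symm
          (Ideal.Quotient.mk I (φ k)) = _
        rw [DoubleQuot.quotQuotEquivQuotOfLE_symm_mk]
        rfl }
  let g' : ∀ n : ℕ, L →ₐ[K] PowerSeries L ⧸ I ^ (n + 1) := fun n =>
    Algebra.FormallySmooth.lift _ (hnil n) (τ n)
  -- representative-level specification
  have spec : ∀ (n : ℕ) (x : L) (r : PowerSeries L),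
      Ideal.Quotient.mk (I ^ (n + 1)) r = g' n x → Ideal.Quotient.mk I r = e₀ x := by
    intro n x r hr
    have h1 : Ideal.Quotient.mk (I.map (Ideal.Quotient.mk (I ^ (n + 1)))) (g' n x) = τ n x :=
      Algebra.FormallySmooth.mk_lift _ (hnil n) (τ n) x
    rw [← hr] at h1
    have h2 := congrArg (DoubleQuot.quotQuotEquivQuotOfLE (hle n)) h1
    have h3 : Ideal.Quotient.mk (I.map (Ideal.Quotient.mk (I ^ (n + 1))))
        (Ideal.Quotient.mk (I ^ (n + 1)) r) = DoubleQuot.quotQuotMk (I ^ (n + 1)) I r := rfl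
    rw [h3, DoubleQuot.quotQuotEquivQuotOfLE_quotQuotMk] at h2
    rw [h2]
    have h4 : τ n x = (DoubleQuot.quotQuotEquivQuotOfLE (hle n)).symm (e₀ x) := rfl
    rw [h4]
    exact (DoubleQuot.quotQuotEquivQuotOfLE (hle n)).apply_symm_apply _
  have compat : ∀ (m n : ℕ), m ≤ n → ∀ (x : L) (r : PowerSeries L),
      Ideal.Quotient.mk (I ^ (n + 1)) r = g' n x →
      Ideal.Quotient.mk (I ^ (m + 1)) r = g' m x := by
    intro m n hmn x r hr
    have hpow : I ^ (n + 1) ≤ I ^ (m + 1) := Ideal.pow_le_pow_right (by omega)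
    let h' : L →ₐ[K] PowerSeries L ⧸ I ^ (m + 1) :=
      { toRingHom := (Ideal.Quotient.factor hpow).comp (g' n).toRingHom
        commutes' := fun k => by
          show Ideal.Quotient.factor hpow ((g' n) (algebraMap K L k)) = _
          rw [AlgHom.commutes]
          show Ideal.Quotient.factor hpow (Ideal.Quotient.mk _ (φ k)) = _
          rw [Ideal.Quotient.factor_mk]
          rfl }
    have hext : h' = g' m := by
      refine Algebra.FormallyUnramified.ext _ (hnil m) fun y => ?_
      obtain ⟨s, hs⟩ := Ideal.Quotient.mk_surjective ((g' n) y)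
      have h1 : h' y = Ideal.Quotient.mk (I ^ (m + 1)) s := by
        show Ideal.Quotient.factor hpow ((g' n) y) = _
        rw [← hs, Ideal.Quotient.factor_mk]
      apply (DoubleQuot.quotQuotEquivQuotOfLE (hle m)).injective
      rw [h1]
      have h3 : Ideal.Quotient.mk (I.map (Ideal.Quotient.mk (I ^ (m + 1))))
          (Ideal.Quotient.mk (I ^ (m + 1)) s) = DoubleQuot.quotQuotMk (I ^ (m + 1)) I s := rfl
      rw [h3, DoubleQuot.quotQuotEquivQuotOfLE_quotQuotMk, spec n y s hs]
      have h5 : Ideal.Quotient.mk (I.map (Ideal.Quotient.mk (I ^ (m + 1)))) ((g' m) y) =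
          τ m y := Algebra.FormallySmooth.mk_lift _ (hnil m) (τ m) y
      rw [h5]
      have h4 : τ m y = (DoubleQuot.quotQuotEquivQuotOfLE (hle m)).symm (e₀ y) := rfl
      rw [h4, RingEquiv.apply_symm_apply]
    have h6 : Ideal.Quotient.mk (I ^ (m + 1)) r = h' x := by
      show _ = Ideal.Quotient.factor hpow ((g' n) x)
      rw [← hr, Ideal.Quotient.factor_mk]
    rw [h6, hext]
  -- choose representatives
  let rep : ℕ → L → PowerSeries L := fun n x =>
    (Ideal.Quotient.mk_surjective (g' n x)).choose
  have hrep : ∀ n x, Ideal.Quotient.mk (I ^ (n + 1)) (rep n x) = g' n x := fun n x =>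
    (Ideal.Quotient.mk_surjective (g' n x)).choose_spec
  -- the candidate function
  let g : L → PowerSeries L := fun x => PowerSeries.mk fun n => PowerSeries.coeff n (rep n x)
  have hmem_of_low : ∀ (n : ℕ) (f : PowerSeries L),
      (∀ k < n + 1, PowerSeries.coeff k f = 0) → f ∈ I ^ (n + 1) := by
    intro n f hf
    obtain ⟨h, hh⟩ := (PowerSeries.X_pow_dvd_iff).mpr hf
    rw [hh]
    exact Ideal.mul_mem_right h _ (Ideal.pow_mem_pow (hmemI _ (by simp)) _)
  have key : ∀ (n : ℕ) (x : L), Ideal.Quotient.mk (I ^ (n + 1)) (g x) = g' n x := by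
    intro n x
    rw [← hrep n x, Ideal.Quotient.eq]
    refine hmem_of_low n _ fun k hk => ?_
    rw [map_sub]
    have hck : PowerSeries.coeff k (g x) = PowerSeries.coeff k (rep k x) := by
      simp [g]
    rw [hck]
    have h7 : Ideal.Quotient.mk (I ^ (k + 1)) (rep n x) = g' k x :=
      compat k n (by omega) x (rep n x) (hrep n x)
    have h8 : rep k x - rep n x ∈ I ^ (k + 1) := by
      rw [← Ideal.Quotient.eq, hrep k x, h7]
    have h9 := coeff_eq_zero_of_mem_pow h8 k (Nat.lt_succ_self k)
    rw [map_sub] at h9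
    exact h9
  have hzero : ∀ f : PowerSeries L, (∀ n : ℕ, f ∈ I ^ (n + 1)) → f = 0 := by
    intro f hf
    refine PowerSeries.ext fun k => ?_
    simpa using coeff_eq_zero_of_mem_pow (hf k) k (Nat.lt_succ_self k)
  have hGsub : ∀ a b : PowerSeries L, (∀ n : ℕ, Ideal.Quotient.mk (I ^ (n + 1)) a =
      Ideal.Quotient.mk (I ^ (n + 1)) b) → a = b := by
    intro a b hab
    have h9 : a - b = 0 := hzero _ fun n => (Ideal.Quotient.eq).mp (hab n)
    exact sub_eq_zero.mp h9
  have hone : g 1 = 1 := hGsub _ _ fun n => by rw [key, map_one, map_one]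
  have hadd : ∀ x y, g (x + y) = g x + g y := fun x y => hGsub _ _ fun n => by
    rw [key, map_add, map_add, key, key]
  have hmul : ∀ x y, g (x * y) = g x * g y := fun x y => hGsub _ _ fun n => by
    rw [key, map_mul, map_mul, key, key]
  have hzero' : g 0 = 0 := hGsub _ _ fun n => by rw [key, map_zero, map_zero]
  have hconst : ∀ x, constantCoeff (R := L) (g x) = x := by
    intro x
    have h0 := spec 0 x (rep 0 x) (hrep 0 x)
    have h1 : e₀ x = Ideal.Quotient.mk I (PowerSeries.C (R := L) x) := rfl
    rw [h1, Ideal.Quotient.eq] at h0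
    have h2 := hmemI' _ h0
    rw [map_sub, PowerSeries.constantCoeff_C] at h2
    have h3 : constantCoeff (R := L) (g x) = constantCoeff (R := L) (rep 0 x) := by
      rw [← PowerSeries.coeff_zero_eq_constantCoeff_apply,
        ← PowerSeries.coeff_zero_eq_constantCoeff_apply]
      simp [g]
    rw [h3]
    exact sub_eq_zero.mp h2
  have hext : ∀ k, g (algebraMap K L k) = φ k := by
    intro k
    refine hGsub _ _ fun n => ?_
    rw [key]
    have h10 : (g' n) (algebraMap K L k) = algebraMap K _ k := AlgHom.commutes _ _
    rw [h10]; rfl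
  let G : L →+* PowerSeries L :=
    { toFun := g
      map_one' := hone
      map_mul' := fun x y => hmul x y
      map_zero' := hzero'
      map_add' := fun x y => hadd x y }
  exact ⟨G, hconst, hext⟩

end IterExt

theorem unique_extension_separable
    {F L : Type*} [Field F] [Field L] [Algebra F L]
    [Algebra.IsAlgebraic F L] [Algebra.IsSeparable F L]
    (p : ℕ) (hp : 0 < p) [CharP F p]
    (θ : F → PowerSeries F) (hθ : IsIterativeDerivation θ) :
    ∃! θL : L → PowerSeries L, IsIterativeDerivation θL ∧
      ∀ f : F, θL (algebraMap F L f) = PowerSeries.map (algebraMap F L) (θ f) := by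
  classical
  obtain ⟨h1, hadd, hmul, h0, hiter⟩ := hθ
  have hz : θ 0 = 0 := by
    have h := hadd 0 0
    rw [add_zero] at h
    exact add_eq_left.mp h.symm
  let θ' : F →+* PowerSeries F :=
    { toFun := θ
      map_one' := h1
      map_mul' := fun a b => hmul a b
      map_zero' := hz
      map_add' := fun a b => hadd a b }
  -- the image subfield of `F` in `L`
  let K : Subfield L := (algebraMap F L).fieldRange
  let e : F ≃+* K := RingEquiv.ofBijective ((algebraMap F L).rangeRestrictField)
    ⟨fun a b hab => (algebraMap F L).injective (congrArg Subtype.val hab),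
     fun y => by
      obtain ⟨y, x, rfl⟩ := y
      exact ⟨x, rfl⟩⟩
  have he : ∀ f : F, (e f : L) = algebraMap F L f := fun f =>
    (algebraMap F L).coe_rangeRestrictField f
  have halgK : ∀ k : K, algebraMap K L k = (k : L) := fun k => rfl
  have halgKe : ∀ f : F, algebraMap K L (e f) = algebraMap F L f := fun f => he f
  have halgKs : ∀ k : K, algebraMap K L k = algebraMap F L (e.symm k) := fun k => by
    rw [← halgKe (e.symm k), RingEquiv.apply_symm_apply]
  haveI : Algebra.IsSeparable K L := by
    refine Algebra.IsSeparable.of_equiv_equiv (e : F ≃+* K) (RingEquiv.refl L) ?_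
    ext f
    simp [halgKe f]
  haveI : Algebra.FormallyEtale K L := Algebra.FormallyEtale.of_isSeparable K L
  -- the extension of `θ` to `K`, valued in `L⟦X⟧`
  let φ : K →+* PowerSeries L :=
    ((PowerSeries.map (algebraMap F L)).comp θ').comp (e.symm : K →+* F)
  have hφ : ∀ k, PowerSeries.constantCoeff (R := L) (φ k) = algebraMap K L k := by
    intro k
    show PowerSeries.constantCoeff (R := L) (PowerSeries.map (algebraMap F L) (θ (e.symm k))) = _
    rw [halgKs k]
    have : PowerSeries.constantCoeff (R := L) (PowerSeries.map (algebraMap F L) (θ (e.symm k))) =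
        algebraMap F L (PowerSeries.constantCoeff (R := F) (θ (e.symm k))) := by
      rw [← PowerSeries.coeff_zero_eq_constantCoeff_apply, PowerSeries.coeff_map,
        PowerSeries.coeff_zero_eq_constantCoeff_apply]
    rw [this]
    congr 1
    have := h0 (e.symm k)
    rwa [PowerSeries.coeff_zero_eq_constantCoeff] at this
  obtain ⟨g, hg0, hgk⟩ := IterExt.exists_lift_powerSeries φ hφ
  -- extension property over F
  have hgF : ∀ f : F, g (algebraMap F L f) =
      PowerSeries.map (algebraMap F L) (θ f) := by
    intro f
    have := hgk (e f)
    rw [halgKe f] at this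
    rw [this]
    show PowerSeries.map (algebraMap F L) (θ (e.symm (e f))) = _
    rw [RingEquiv.symm_apply_apply]
  have hchoose : ∀ i j : ℕ, (j + i).choose j = (i + j).choose i := by
    intro i j
    rw [Nat.choose_symm_add, add_comm]
  -- iterativity of `g`
  have hiterL : ∀ i j : ℕ, ∀ r : L,
      PowerSeries.coeff i (g (PowerSeries.coeff j (g r))) =
        (i + j).choose i • PowerSeries.coeff (i + j) (g r) := by
    let Φ₁ : L →+* PowerSeries (PowerSeries L) :=
      (PowerSeries.map (g : L →+* PowerSeries L)).comp (g : L →+* PowerSeries L)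
    let Φ₂ : L →+* PowerSeries (PowerSeries L) :=
      IterExt.shiftHom.comp (g : L →+* PowerSeries L)
    have hΦ₁ : ∀ (r : L) (i j : ℕ), PowerSeries.coeff j
        (PowerSeries.coeff i (Φ₁ r)) =
        PowerSeries.coeff j (g (PowerSeries.coeff i (g r))) := by
      intro r i j
      show PowerSeries.coeff j (PowerSeries.coeff i
        (PowerSeries.map (g : L →+* PowerSeries L) (g r))) = _
      rw [PowerSeries.coeff_map]
    have hΦ₂ : ∀ (r : L) (i j : ℕ), PowerSeries.coeff j
        (PowerSeries.coeff i (Φ₂ r)) =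
        (i + j).choose i • PowerSeries.coeff (i + j) (g r) := by
      intro r i j
      show PowerSeries.coeff j (PowerSeries.coeff i
        (IterExt.shiftHom (g r))) = _
      rw [IterExt.coeff_shiftHom]
    have hbase : ∀ f : F, Φ₁ (algebraMap F L f) = Φ₂ (algebraMap F L f) := by
      intro f
      refine PowerSeries.ext fun i => PowerSeries.ext fun j => ?_
      rw [hΦ₁, hΦ₂]
      have b1 : PowerSeries.coeff i (g (algebraMap F L f)) =
          algebraMap F L (PowerSeries.coeff i (θ f)) := by
        rw [hgF f, PowerSeries.coeff_map]
      rw [b1, hgF (PowerSeries.coeff i (θ f)), PowerSeries.coeff_map, hiter j i f,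
        map_nsmul]
      rw [hgF f, PowerSeries.coeff_map]
      rw [hchoose, add_comm j i]
    letI : Algebra K (PowerSeries (PowerSeries L)) := (Φ₂.comp (algebraMap K L)).toAlgebra
    let G₁ : L →ₐ[K] PowerSeries (PowerSeries L) :=
      { toRingHom := Φ₁
        commutes' := fun k => by
          show Φ₁ (algebraMap K L k) = Φ₂ (algebraMap K L k)
          rw [halgKs k]
          exact hbase (e.symm k) }
    let G₂ : L →ₐ[K] PowerSeries (PowerSeries L) :=
      { toRingHom := Φ₂
        commutes' := fun k => rfl }
    have hGG : G₁ = G₂ := by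
      refine IterExt.alghom_ext (RingHom.ker ((PowerSeries.constantCoeff (R := L)).comp
        (PowerSeries.constantCoeff (R := (PowerSeries L)))))
        (fun x hx => IterExt.eq_zero_of_forall_mem_pow₂ hx) G₁ G₂ fun x => ?_
      rw [RingHom.mem_ker, map_sub]
      have c1 : ((PowerSeries.constantCoeff (R := L)).comp
          (PowerSeries.constantCoeff (R := (PowerSeries L)))) (G₁ x) = x := by
        show PowerSeries.constantCoeff (R := L)
          (PowerSeries.constantCoeff (R := (PowerSeries L)) (Φ₁ x)) = x
        rw [← PowerSeries.coeff_zero_eq_constantCoeff_apply,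
          ← PowerSeries.coeff_zero_eq_constantCoeff_apply, hΦ₁]
        rw [PowerSeries.coeff_zero_eq_constantCoeff_apply, hg0,
          PowerSeries.coeff_zero_eq_constantCoeff_apply, hg0]
      have c2 : ((PowerSeries.constantCoeff (R := L)).comp
          (PowerSeries.constantCoeff (R := (PowerSeries L)))) (G₂ x) = x := by
        show PowerSeries.constantCoeff (R := L)
          (PowerSeries.constantCoeff (R := (PowerSeries L)) (Φ₂ x)) = x
        rw [← PowerSeries.coeff_zero_eq_constantCoeff_apply,
          ← PowerSeries.coeff_zero_eq_constantCoeff_apply, hΦ₂]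
        simp only [Nat.choose_self, one_smul, Nat.add_zero]
        rw [PowerSeries.coeff_zero_eq_constantCoeff_apply, hg0]
      rw [c1, c2, sub_self]
    intro i j r
    have := DFunLike.congr_fun hGG r
    have h12 : Φ₁ r = Φ₂ r := this
    have := congrArg (fun h => PowerSeries.coeff i
      (PowerSeries.coeff j h)) h12
    rw [hΦ₁, hΦ₂] at this
    rw [this, hchoose, add_comm j i]
  -- the witness
  refine ⟨⇑g, ⟨⟨map_one g, fun a b => map_add g a b, fun a b => map_mul g a b,
    fun r => by rw [PowerSeries.coeff_zero_eq_constantCoeff_apply]; exact hg0 r,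
    hiterL⟩, hgF⟩, ?_⟩
  -- uniqueness
  rintro θ₂ ⟨⟨t1, tadd, tmul, t0, titer⟩, hext₂⟩
  have tz : θ₂ 0 = 0 := by
    have h := tadd 0 0
    rw [add_zero] at h
    exact add_eq_left.mp h.symm
  let Θ₂ : L →+* PowerSeries L :=
    { toFun := θ₂
      map_one' := t1
      map_mul' := fun a b => tmul a b
      map_zero' := tz
      map_add' := fun a b => tadd a b }
  letI : Algebra K (PowerSeries L) := φ.toAlgebra
  let H₁ : L →ₐ[K] PowerSeries L :=
    { toRingHom := Θ₂
      commutes' := fun k => by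
        show θ₂ (algebraMap K L k) = φ k
        rw [halgKs k]
        exact hext₂ (e.symm k) }
  let H₂ : L →ₐ[K] PowerSeries L :=
    { toRingHom := (g : L →+* PowerSeries L)
      commutes' := fun k => hgk k }
  have hHH : H₁ = H₂ := by
    refine IterExt.alghom_ext (RingHom.ker (PowerSeries.constantCoeff (R := L)))
      (fun x hx => IterExt.eq_zero_of_forall_mem_pow hx) H₁ H₂ fun x => ?_
    rw [RingHom.mem_ker, map_sub]
    have a1 : PowerSeries.constantCoeff (R := L) (θ₂ x) = x := by
      rw [← PowerSeries.coeff_zero_eq_constantCoeff_apply]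
      exact t0 x
    show PowerSeries.constantCoeff (R := L) (θ₂ x) - PowerSeries.constantCoeff (R := L) (g x) = 0
    rw [a1, hg0 x, sub_self]
  funext x
  exact DFunLike.congr_fun hHH x
end

section
/- Let F be a field of characteristic p > 0, let θ be a non-trivial iterative derivation on F, let P ∈ F⟦T⟧ have constant coefficient 0, and define θ̃ : F → F⟦T⟧ by θ̃(f) := PowerSeries.subst P (θ f), i.e. θ̃(f) = Σ_k θ^{(k)}(f)·P^k. Then θ̃ is an iterative derivation on F if and only if, in (F⟦U⟧)⟦T⟧, one has PowerSeries.subst (U + T) P = ι(P) + PowerSeries.map θ̃_U (P), where U + T denotes the sum of the two variables in (F⟦U⟧)⟦T⟧, ι(P) is the image of P placed in the variable U (an element of F⟦U⟧ viewed as a constant of (F⟦U⟧)⟦T⟧), θ̃_U : F →+* F⟦U⟧ is θ̃ with output variable renamed to U, and PowerSeries.map θ̃_U applies θ̃_U to each coefficient of P. -/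
/-- Substitution `g ↦ g(P)` of a power series `P` (with zero constant coefficient)
into a one-variable power series `g`; since `coeff n (P ^ k) = 0` for `k > n` when
`constantCoeff P = 0`, the coefficientwise truncated sum below is the honest
substitution `Σ_k (coeff k g) · P^k`. -/
noncomputable def psSubst {F : Type*} [CommRing F] (P g : PowerSeries F) : PowerSeries F :=
  PowerSeries.mk fun n => ∑ k ∈ Finset.range (n + 1),
    PowerSeries.coeff k g * PowerSeries.coeff n (P ^ k)

/-- Substitution `g ↦ g(A)` of a two-variable power series `A ∈ F⟦U⟧⟦T⟧` lying in the
ideal `(U, T)` into a one-variable power series `g ∈ F⟦X⟧`: the coefficient of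
`U^i T^j` in `A ^ k` vanishes for `k > i + j`, so the truncated sum below is the honest
substitution `Σ_k (coeff k g) · A^k`. -/
noncomputable def psSubst2 {F : Type*} [CommRing F]
    (A : PowerSeries (PowerSeries F)) (g : PowerSeries F) : PowerSeries (PowerSeries F) :=
  PowerSeries.mk fun j => PowerSeries.mk fun i =>
    ∑ k ∈ Finset.range (i + j + 1),
      PowerSeries.coeff k g *
        PowerSeries.coeff i (PowerSeries.coeff j (A ^ k))

namespace Lemma33

open PowerSeries Finset Finset.Nat

variable {F : Type*} [CommRing F]

theorem coeff_pow_eq_zero {P : F⟦X⟧} (hP : constantCoeff P = 0) {k n : ℕ} (h : n < k) :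
    coeff n (P ^ k) = 0 := by
  have : (X : F⟦X⟧) ^ k ∣ P ^ k := pow_dvd_pow_of_dvd (X_dvd_iff.mpr hP) k
  exact (X_pow_dvd_iff.mp this) n h

theorem coeff_psSubst (P g : PowerSeries F) (n : ℕ) :
    coeff n (psSubst P g) =
      ∑ k ∈ Finset.range (n + 1), coeff k g * coeff n (P ^ k) :=
  coeff_mk _ _

theorem coeff_psSubst_ext {P : F⟦X⟧} (hP : constantCoeff P = 0) (g : F⟦X⟧) {n N : ℕ}
    (h : n < N) :
    coeff n (psSubst P g) = ∑ k ∈ Finset.range N, coeff k g * coeff n (P ^ k) := by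
  rw [coeff_psSubst]
  apply Finset.sum_subset (Finset.range_subset_range.mpr h)
  intro k _ hk
  rw [coeff_pow_eq_zero hP (by simpa using hk), mul_zero]

theorem psSubst_add (P g h : F⟦X⟧) :
    psSubst P (g + h) = psSubst P g + psSubst P h := by
  ext n
  simp [coeff_psSubst, add_mul, Finset.sum_add_distrib]

theorem psSubst_zero (P : F⟦X⟧) : psSubst P 0 = 0 := by
  ext n; simp [coeff_psSubst]

theorem psSubst_one (P : F⟦X⟧) : psSubst P 1 = 1 := by
  ext n
  rw [coeff_psSubst]
  rw [Finset.sum_eq_single 0]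
  · simp
  · intro k _ hk; simp [coeff_one, hk]
  · simp

theorem sum_range_antidiagonal {M : Type*} [AddCommMonoid M] (n : ℕ) (f : ℕ × ℕ → M) :
    ∑ k ∈ range n, ∑ p ∈ antidiagonal k, f p
      = ∑ p ∈ (range n).biUnion (fun k => antidiagonal k), f p := by
  refine (Finset.sum_biUnion ?_).symm
  intro a _ b _ hab
  refine Finset.disjoint_left.mpr fun p hpa hpb => hab ?_
  rw [← Finset.HasAntidiagonal.mem_antidiagonal.mp hpa, ← Finset.HasAntidiagonal.mem_antidiagonal.mp hpb]

theorem mem_biUnion_antidiagonal {n : ℕ} {p : ℕ × ℕ} :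
    p ∈ (range n).biUnion (fun k => antidiagonal k) ↔ p.1 + p.2 < n := by
  simp only [Finset.mem_biUnion, Finset.mem_range, Finset.HasAntidiagonal.mem_antidiagonal]
  constructor
  · rintro ⟨k, hk, rfl⟩; exact hk
  · intro h; exact ⟨p.1 + p.2, h, rfl⟩

theorem tri_to_rect {M : Type*} [AddCommMonoid M] (i j : ℕ) (G : ℕ → ℕ → M)
    (h1 : ∀ u v, i < u → G u v = 0) (h2 : ∀ u v, j < v → G u v = 0) :
    ∑ k ∈ range (i + j + 1), ∑ p ∈ antidiagonal k, G p.1 p.2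
      = ∑ u ∈ range (i + 1), ∑ v ∈ range (j + 1), G u v := by
  rw [sum_range_antidiagonal, ← Finset.sum_product']
  refine (Finset.sum_subset ?_ ?_).symm
  · intro p hp
    rw [mem_biUnion_antidiagonal]
    rw [Finset.mem_product, Finset.mem_range, Finset.mem_range] at hp
    omega
  · intro p _ hp
    rw [Finset.mem_product, Finset.mem_range, Finset.mem_range] at hp
    by_cases h : p.1 ≤ i
    · exact h2 p.1 p.2 (by omega)
    · exact h1 p.1 p.2 (by omega)

theorem psSubst_mul {P : F⟦X⟧} (hP : constantCoeff P = 0) (g h : F⟦X⟧) :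
    psSubst P (g * h) = psSubst P g * psSubst P h := by
  ext n
  have key : ∀ k1 k2 : ℕ, coeff n (P ^ (k1 + k2)) =
      ∑ p ∈ antidiagonal n, coeff p.1 (P ^ k1) * coeff p.2 (P ^ k2) := by
    intro k1 k2; rw [pow_add, coeff_mul]
  have LHS : coeff n (psSubst P (g * h)) =
      ∑ p ∈ (range (n+1)).biUnion (fun k => antidiagonal k),
        coeff p.1 g * coeff p.2 h * coeff n (P ^ (p.1 + p.2)) := by
    rw [coeff_psSubst, ← sum_range_antidiagonal]
    refine Finset.sum_congr rfl fun k _ => ?_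
    rw [coeff_mul, Finset.sum_mul]
    refine Finset.sum_congr rfl fun p hp => ?_
    rw [Finset.HasAntidiagonal.mem_antidiagonal.mp hp]
  rw [LHS, coeff_mul]
  have RHS : ∀ p : ℕ × ℕ, p ∈ antidiagonal n →
      coeff p.1 (psSubst P g) * coeff p.2 (psSubst P h) =
      ∑ k1 ∈ range (n+1), ∑ k2 ∈ range (n+1),
        coeff k1 g * coeff k2 h * (coeff p.1 (P ^ k1) * coeff p.2 (P ^ k2)) := by
    intro p hp
    have h1 : p.1 < n + 1 := by
      have := Finset.HasAntidiagonal.mem_antidiagonal.mp hp; omega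
    have h2 : p.2 < n + 1 := by
      have := Finset.HasAntidiagonal.mem_antidiagonal.mp hp; omega
    rw [coeff_psSubst_ext hP g h1, coeff_psSubst_ext hP h h2, Finset.sum_mul_sum]
    refine Finset.sum_congr rfl fun k1 _ => Finset.sum_congr rfl fun k2 _ => by ring
  rw [Finset.sum_congr rfl RHS, Finset.sum_comm]
  rw [Finset.sum_congr (rfl : range (n+1) = range (n+1))
    (fun k1 _ => Finset.sum_comm (s := antidiagonal n))]
  have step : ∀ k1 ∈ range (n+1), ∀ k2 ∈ range (n+1),
      (∑ p ∈ antidiagonal n,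
        coeff k1 g * coeff k2 h * (coeff p.1 (P ^ k1) * coeff p.2 (P ^ k2))) =
      coeff k1 g * coeff k2 h * coeff n (P ^ (k1 + k2)) := by
    intro k1 _ k2 _
    rw [key, Finset.mul_sum]
  calc ∑ p ∈ (range (n+1)).biUnion (fun k => antidiagonal k),
        coeff p.1 g * coeff p.2 h * coeff n (P ^ (p.1 + p.2))
      = ∑ p ∈ range (n+1) ×ˢ range (n+1),
        coeff p.1 g * coeff p.2 h * coeff n (P ^ (p.1 + p.2)) := by
        refine Finset.sum_subset ?_ ?_
        · intro p hp
          rw [mem_biUnion_antidiagonal] at hp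
          rw [Finset.mem_product, Finset.mem_range, Finset.mem_range]; omega
        · intro p _ hp
          rw [mem_biUnion_antidiagonal] at hp
          rw [coeff_pow_eq_zero hP (by omega), mul_zero]
    _ = ∑ k1 ∈ range (n+1), ∑ k2 ∈ range (n+1),
        coeff k1 g * coeff k2 h * coeff n (P ^ (k1 + k2)) := by
        rw [Finset.sum_product]
    _ = _ := by
        refine Finset.sum_congr rfl fun k1 hk1 => Finset.sum_congr rfl fun k2 hk2 => ?_
        rw [← step k1 hk1 k2 hk2]

/-! ### the twisted derivation θ̃ -/

section tld

variable (θ : F → PowerSeries F) (P : PowerSeries F)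

theorem coeff_zero_psSubst (g : F⟦X⟧) : coeff 0 (psSubst P g) = coeff 0 g := by
  rw [coeff_psSubst]; simp

/-- `θ̃` as a ring homomorphism. -/
noncomputable def tldHom (hθ : IsIterativeDerivation θ) (hP : constantCoeff P = 0) :
    F →+* PowerSeries F :=
  RingHom.mk'
    { toFun := fun f => psSubst P (θ f)
      map_one' := by show psSubst P (θ 1) = 1; rw [hθ.1, psSubst_one]
      map_mul' := fun a b => by
        show psSubst P (θ (a * b)) = psSubst P (θ a) * psSubst P (θ b)
        rw [hθ.2.2.1, psSubst_mul hP] }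
    (fun a b => by
      show psSubst P (θ (a + b)) = psSubst P (θ a) + psSubst P (θ b)
      rw [hθ.2.1, psSubst_add])

theorem tldHom_apply (hθ : IsIterativeDerivation θ) (hP : constantCoeff P = 0) (f : F) :
    tldHom θ P hθ hP f = psSubst P (θ f) := rfl

theorem theta_zero (hθ : IsIterativeDerivation θ) : θ 0 = 0 := by
  have h := hθ.2.1 0 0
  rw [add_zero] at h
  have : θ 0 + θ 0 = θ 0 + 0 := by rw [add_zero, ← h]
  exact (add_left_cancel this)

theorem coeff_zero_tld (hθ : IsIterativeDerivation θ) (f : F) :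
    coeff 0 (psSubst P (θ f)) = f := by
  rw [coeff_zero_psSubst, hθ.2.2.2.1]

end tld


/-! ### double power series -/


noncomputable def co (i j : ℕ) (W : PowerSeries (PowerSeries F)) : F :=
  PowerSeries.coeff i (PowerSeries.coeff j W)

theorem co_add (i j : ℕ) (V W : PowerSeries (PowerSeries F)) :
    co i j (V + W) = co i j V + co i j W := by simp [co]

theorem co_sub (i j : ℕ) (V W : PowerSeries (PowerSeries F)) :
    co i j (V - W) = co i j V - co i j W := by simp [co]

theorem co_sum {α : Type*} (s : Finset α) (f : α → PowerSeries (PowerSeries F)) (i j : ℕ) :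
    co i j (∑ x ∈ s, f x) = ∑ x ∈ s, co i j (f x) := by simp [co]

theorem co_one (i j : ℕ) :
    co i j (1 : PowerSeries (PowerSeries F)) = if i = 0 ∧ j = 0 then 1 else 0 := by
  simp only [co, coeff_one]
  by_cases hj : j = 0 <;> by_cases hi : i = 0 <;> simp [hi, hj, coeff_one]

theorem ext2 {V W : PowerSeries (PowerSeries F)} (h : ∀ i j, co i j V = co i j W) : V = W := by
  ext j i
  exact h i j

theorem co_mul (i j : ℕ) (V W : PowerSeries (PowerSeries F)) :
    co i j (V * W) = ∑ s ∈ antidiagonal j, ∑ p ∈ antidiagonal i,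
      co p.1 s.1 V * co p.2 s.2 W := by
  simp only [co, coeff_mul, map_sum]

theorem co_CC_mul (x : F) (W : PowerSeries (PowerSeries F)) (i j : ℕ) :
    co i j (PowerSeries.C (R := PowerSeries F) (PowerSeries.C (R := F) x) * W) = x * co i j W := by
  simp [co, coeff_C_mul]

noncomputable def Psi (g : PowerSeries F) : PowerSeries (PowerSeries F) :=
  PowerSeries.mk fun j => PowerSeries.mk fun i => ((i + j).choose i : F) * coeff (i + j) g

theorem co_Psi (g : PowerSeries F) (i j : ℕ) :
    co i j (Psi g) = ((i + j).choose i : F) * coeff (i + j) g := by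
  simp [co, Psi, coeff_mk]

theorem Psi_one : Psi (1 : PowerSeries F) = 1 := by
  refine ext2 fun i j => ?_
  rw [co_Psi, co_one, coeff_one]
  by_cases h : i = 0 ∧ j = 0
  · obtain ⟨rfl, rfl⟩ := h; simp
  · have : ¬ (i + j = 0) := by omega
    simp [this, h]

theorem Psi_mul (g h : PowerSeries F) : Psi (g * h) = Psi g * Psi h := by
  refine ext2 fun i j => ?_
  rw [co_Psi, coeff_mul, co_mul]
  simp only [co_Psi]
  have vdm : ∀ q ∈ antidiagonal (i + j),
      (((i+j).choose i : F)) * (coeff q.1 g * coeff q.2 h) =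
      ∑ p ∈ antidiagonal i, ((q.1.choose p.1 * q.2.choose p.2 : ℕ) : F) *
        (coeff q.1 g * coeff q.2 h) := by
    intro q hq
    rw [← Finset.sum_mul, ← Nat.cast_sum]
    congr 2
    rw [← Nat.add_choose_eq, Finset.HasAntidiagonal.mem_antidiagonal.mp hq]
  rw [Finset.mul_sum, Finset.sum_congr rfl vdm]
  rw [← Finset.sum_product']
  conv_rhs => rw [← Finset.sum_product']
  -- LHS over antidiagonal (i+j) ×ˢ antidiagonal i, RHS over antidiagonal j ×ˢ antidiagonal i
  set f : (ℕ × ℕ) × ℕ × ℕ → F := fun x =>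
    ((x.1.1.choose x.2.1 * x.1.2.choose x.2.2 : ℕ) : F) * (coeff x.1.1 g * coeff x.1.2 h)
    with hf
  set e : (ℕ × ℕ) × ℕ × ℕ → F := fun y =>
    ((y.2.1 + y.1.1).choose y.2.1 : F) * coeff (y.2.1 + y.1.1) g *
      (((y.2.2 + y.1.2).choose y.2.2 : F) * coeff (y.2.2 + y.1.2) h) with he
  show ∑ x ∈ antidiagonal (i+j) ×ˢ antidiagonal i, f x = ∑ y ∈ antidiagonal j ×ˢ antidiagonal i, e y
  have step1 : ∑ x ∈ antidiagonal (i+j) ×ˢ antidiagonal i, f x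
      = ∑ x ∈ (antidiagonal (i+j) ×ˢ antidiagonal i).filter
          (fun x => x.2.1 ≤ x.1.1 ∧ x.2.2 ≤ x.1.2), f x := by
    refine (Finset.sum_subset (Finset.filter_subset _ _) ?_).symm
    intro x hx hxf
    rw [Finset.mem_filter, not_and_or] at hxf
    have hcc : x.1.1.choose x.2.1 * x.1.2.choose x.2.2 = 0 := by
      rcases hxf with h' | h'
      · exact absurd hx h'
      rw [not_and_or] at h'
      rcases h' with h' | h'
      · rw [Nat.choose_eq_zero_of_lt (show x.1.1 < x.2.1 by omega), zero_mul]
      · rw [Nat.choose_eq_zero_of_lt (show x.1.2 < x.2.2 by omega), mul_zero]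
    rw [hf]; simp only []; rw [hcc, Nat.cast_zero, zero_mul]
  rw [step1]
  refine Finset.sum_bij' (i := fun x _ => ((x.1.1 - x.2.1, x.1.2 - x.2.2), x.2))
    (j := fun y _ => ((y.2.1 + y.1.1, y.2.2 + y.1.2), y.2)) ?_ ?_ ?_ ?_ ?_
  · intro x hx
    simp only [Finset.mem_filter, Finset.mem_product, Finset.HasAntidiagonal.mem_antidiagonal] at hx ⊢
    obtain ⟨⟨hq, hp⟩, h1, h2⟩ := hx
    constructor
    · omega
    · exact hp
  · intro y hy
    simp only [Finset.mem_filter, Finset.mem_product, Finset.HasAntidiagonal.mem_antidiagonal] at hy ⊢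
    obtain ⟨hs, hp⟩ := hy
    refine ⟨⟨by omega, hp⟩, by omega, by omega⟩
  · intro x hx
    simp only [Finset.mem_filter, Finset.mem_product, Finset.HasAntidiagonal.mem_antidiagonal] at hx
    obtain ⟨⟨hq, hp⟩, h1, h2⟩ := hx
    ext <;> simp <;> omega
  · intro y hy
    ext <;> simp <;> omega
  · intro x hx
    simp only [Finset.mem_filter, Finset.mem_product, Finset.HasAntidiagonal.mem_antidiagonal] at hx
    obtain ⟨⟨hq, hp⟩, h1, h2⟩ := hx
    rw [hf, he]
    simp only []
    have e1 : x.2.1 + (x.1.1 - x.2.1) = x.1.1 := by omega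
    have e2 : x.2.2 + (x.1.2 - x.2.2) = x.1.2 := by omega
    rw [e1, e2]
    push_cast
    ring

theorem Psi_pow (g : PowerSeries F) (k : ℕ) : Psi (g ^ k) = (Psi g) ^ k := by
  induction k with
  | zero => simpa using Psi_one
  | succ k ih => rw [pow_succ, pow_succ, Psi_mul, ih]


/-! ### the two sides A and B -/

theorem Psi_X : Psi (X : F⟦X⟧) =
    PowerSeries.C (R := PowerSeries F) PowerSeries.X + PowerSeries.X := by
  refine ext2 fun i j => ?_
  rw [co_Psi, co_add]
  simp only [co, PowerSeries.coeff_C, PowerSeries.coeff_X]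
  by_cases hj0 : j = 0 <;> by_cases hj1 : j = 1 <;> by_cases hi0 : i = 0 <;>
    by_cases hi1 : i = 1 <;>
    simp_all [PowerSeries.coeff_X, PowerSeries.coeff_one] <;> omega

theorem co_psSubst2 (W : PowerSeries (PowerSeries F)) (g : PowerSeries F) (i j : ℕ) :
    co i j (psSubst2 W g) = ∑ k ∈ range (i + j + 1), coeff k g * co i j (W ^ k) := by
  simp only [co, psSubst2, coeff_mk]

theorem A_eq_Psi {P : F⟦X⟧} (hP : constantCoeff P = 0) :
    psSubst2 (PowerSeries.C (R := PowerSeries F) PowerSeries.X + PowerSeries.X) P = Psi P := by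
  refine ext2 fun i j => ?_
  rw [co_psSubst2, co_Psi]
  have hco : ∀ k : ℕ, co i j ((PowerSeries.C (R := PowerSeries F) PowerSeries.X
      + PowerSeries.X) ^ k) = if i + j = k then ((i+j).choose i : F) else 0 := by
    intro k
    rw [← Psi_X, ← Psi_pow, co_Psi, PowerSeries.coeff_X_pow]
    by_cases h : i + j = k <;> simp [h]
  rw [Finset.sum_congr rfl fun k _ => by rw [hco k]]
  rw [Finset.sum_eq_single (i + j)]
  · simp [mul_comm]
  · intro k _ hk; simp [Ne.symm hk]
  · intro h; exact absurd (Finset.self_mem_range_succ (i+j)) h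

section AB

variable (θ : F → PowerSeries F) (P : PowerSeries F)

/-- the series `θ̃⟦T⟧(P)` -/
noncomputable def QQ : PowerSeries (PowerSeries F) :=
  PowerSeries.mk fun n => psSubst P (θ (coeff n P))

theorem QQ_eq_map (hθ : IsIterativeDerivation θ) (hP : constantCoeff P = 0) :
    QQ θ P = PowerSeries.map (tldHom θ P hθ hP) P := by
  ext n
  rw [QQ, coeff_mk, PowerSeries.coeff_map, tldHom_apply]

theorem co_QQ_pow (hθ : IsIterativeDerivation θ) (hP : constantCoeff P = 0) (v i j : ℕ) :
    co i j ((QQ θ P) ^ v) = coeff i (psSubst P (θ (coeff j (P ^ v)))) := by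
  rw [QQ_eq_map θ P hθ hP, ← map_pow]
  simp only [co, PowerSeries.coeff_map, tldHom_apply]

theorem co_B_pow (hθ : IsIterativeDerivation θ) (hP : constantCoeff P = 0) (k i j : ℕ) :
    co i j ((PowerSeries.C (R := PowerSeries F) P + QQ θ P) ^ k)
      = ∑ u ∈ range (k + 1), (k.choose u : F) *
          ∑ p ∈ antidiagonal i, coeff p.1 (P ^ u) *
            coeff p.2 (psSubst P (θ (coeff j (P ^ (k - u))))) := by
  rw [add_pow, co_sum]
  refine Finset.sum_congr rfl fun u hu => ?_
  have hcast : ((k.choose u : ℕ) : PowerSeries (PowerSeries F))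
      = PowerSeries.C (R := PowerSeries F) (PowerSeries.C (R := F) ((k.choose u : ℕ) : F)) := by
    rw [← map_natCast ((PowerSeries.C (R := PowerSeries F)).comp (PowerSeries.C (R := F))) (k.choose u)]
    rfl
  rw [hcast, mul_comm _ (PowerSeries.C (R := PowerSeries F) (PowerSeries.C (R := F) _)), co_CC_mul]
  congr 1
  rw [← map_pow]
  simp only [co]
  rw [PowerSeries.coeff_C_mul, coeff_mul]
  refine Finset.sum_congr rfl fun p _ => ?_
  rw [← co_QQ_pow θ P hθ hP, co]

theorem compA {P : F⟦X⟧} (hP : constantCoeff P = 0) (g : F⟦X⟧) (i j : ℕ) :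
    co i j (psSubst2 (Psi P) g)
      = ((i+j).choose i : F) * coeff (i + j) (psSubst P g) := by
  rw [co_psSubst2, coeff_psSubst]
  simp only [Finset.mul_sum]
  refine Finset.sum_congr rfl fun k _ => ?_
  rw [← Psi_pow, co_Psi]
  ring

theorem compB (hθ : IsIterativeDerivation θ) (hP : constantCoeff P = 0) (r : F) (i j : ℕ) :
    co i j (psSubst2 (PowerSeries.C (R := PowerSeries F) P + QQ θ P) (θ r))
      = coeff i (psSubst P (θ (coeff j (psSubst P (θ r))))) := by
  rw [co_psSubst2]
  -- expand B powers
  have step1 : ∀ k ∈ range (i + j + 1),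
      coeff k (θ r) * co i j ((PowerSeries.C (R := PowerSeries F) P + QQ θ P) ^ k)
      = ∑ u ∈ range (k + 1),
          ∑ p ∈ antidiagonal i,
            coeff u (θ (coeff (k - u) (θ r))) *
            (coeff p.1 (P ^ u) *
              coeff p.2 (psSubst P (θ (coeff j (P ^ (k - u)))))) := by
    intro k _
    rw [co_B_pow θ P hθ hP, Finset.mul_sum]
    refine Finset.sum_congr rfl fun u hu => ?_
    have hu' : u ≤ k := by simpa using Nat.lt_succ_iff.mp (Finset.mem_range.mp hu)
    have iter : coeff u (θ (coeff (k - u) (θ r)))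
        = (k.choose u : F) * coeff k (θ r) := by
      have h5 := hθ.2.2.2.2 u (k - u) r
      rw [h5]
      have e : u + (k - u) = k := by omega
      rw [e, nsmul_eq_mul]
    simp only [Finset.mul_sum]
    refine Finset.sum_congr rfl fun p _ => ?_
    rw [iter]
    ring
  rw [Finset.sum_congr rfl step1]
  -- reindex over antidiagonals
  set G : ℕ → ℕ → F := fun u v =>
    ∑ p ∈ antidiagonal i,
      coeff u (θ (coeff v (θ r))) *
      (coeff p.1 (P ^ u) * coeff p.2 (psSubst P (θ (coeff j (P ^ v))))) with hG
  have step2 : ∑ k ∈ range (i + j + 1), ∑ u ∈ range (k + 1),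
      ∑ p ∈ antidiagonal i,
        coeff u (θ (coeff (k - u) (θ r))) *
        (coeff p.1 (P ^ u) * coeff p.2 (psSubst P (θ (coeff j (P ^ (k - u))))))
      = ∑ k ∈ range (i + j + 1), ∑ q ∈ antidiagonal k, G q.1 q.2 := by
    refine Finset.sum_congr rfl fun k _ => ?_
    rw [Finset.Nat.sum_antidiagonal_eq_sum_range_succ_mk (fun q => G q.1 q.2) k]
  rw [step2, tri_to_rect i j G ?_ ?_]
  · -- main rearrangement
    have swap1 : ∑ u ∈ range (i + 1), ∑ v ∈ range (j + 1), G u v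
        = ∑ v ∈ range (j + 1), ∑ p ∈ antidiagonal i,
            (∑ u ∈ range (i + 1),
              coeff u (θ (coeff v (θ r))) * coeff p.1 (P ^ u)) *
            coeff p.2 (psSubst P (θ (coeff j (P ^ v)))) := by
      rw [Finset.sum_comm]
      refine Finset.sum_congr rfl fun v _ => ?_
      rw [hG]
      simp only []
      rw [Finset.sum_comm]
      refine Finset.sum_congr rfl fun p _ => ?_
      rw [Finset.sum_mul]
      refine Finset.sum_congr rfl fun u _ => by ring
    rw [swap1]
    have step3 : ∀ v ∈ range (j + 1), ∀ p ∈ antidiagonal i,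
        (∑ u ∈ range (i + 1),
          coeff u (θ (coeff v (θ r))) * coeff p.1 (P ^ u))
        = coeff p.1 (psSubst P (θ (coeff v (θ r)))) := by
      intro v _ p hp
      have hp1 : p.1 < i + 1 := by
        have := Finset.HasAntidiagonal.mem_antidiagonal.mp hp; omega
      rw [coeff_psSubst_ext hP _ hp1]
    calc ∑ v ∈ range (j + 1), ∑ p ∈ antidiagonal i,
          (∑ u ∈ range (i + 1),
            coeff u (θ (coeff v (θ r))) * coeff p.1 (P ^ u)) *
          coeff p.2 (psSubst P (θ (coeff j (P ^ v))))
        = ∑ v ∈ range (j + 1), ∑ p ∈ antidiagonal i,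
            coeff p.1 (psSubst P (θ (coeff v (θ r)))) *
            coeff p.2 (psSubst P (θ (coeff j (P ^ v)))) := by
          refine Finset.sum_congr rfl fun v hv => Finset.sum_congr rfl fun p hp => ?_
          rw [step3 v hv p hp]
      _ = ∑ v ∈ range (j + 1),
            coeff i (psSubst P (θ (coeff v (θ r))) *
              psSubst P (θ (coeff j (P ^ v)))) := by
          refine Finset.sum_congr rfl fun v _ => ?_
          rw [coeff_mul]
      _ = ∑ v ∈ range (j + 1),
            coeff i (psSubst P (θ (coeff v (θ r) * coeff j (P ^ v)))) := by
          refine Finset.sum_congr rfl fun v _ => ?_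
          rw [hθ.2.2.1, psSubst_mul hP]
      _ = coeff i (psSubst P (θ (∑ v ∈ range (j + 1),
            coeff v (θ r) * coeff j (P ^ v)))) := by
          rw [← map_sum (coeff i)]
          congr 1
          exact (map_sum (tldHom θ P hθ hP)
            (fun v => coeff v (θ r) * coeff j (P ^ v)) (range (j + 1))).symm
      _ = coeff i (psSubst P (θ (coeff j (psSubst P (θ r))))) := by
          rw [coeff_psSubst P (θ r) j]
  · -- h1 : i < u → G u v = 0
    intro u v hu
    rw [hG]
    simp only []
    refine Finset.sum_eq_zero fun p hp => ?_
    have hp1 : p.1 ≤ i := by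
      have := Finset.HasAntidiagonal.mem_antidiagonal.mp hp; omega
    rw [coeff_pow_eq_zero hP (by omega)]
    ring
  · -- h2 : j < v → G u v = 0
    intro u v hv
    rw [hG]
    simp only []
    refine Finset.sum_eq_zero fun p _ => ?_
    rw [coeff_pow_eq_zero hP hv, theta_zero θ hθ, psSubst_zero, map_zero]
    ring

end AB

/-! ### the iterativity criterion -/

theorem iter_iff (θ : F → PowerSeries F) (P : PowerSeries F)
    (hθ : IsIterativeDerivation θ) (hP : constantCoeff P = 0) :
    IsIterativeDerivation (fun f => psSubst P (θ f)) ↔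
      ∀ r : F, psSubst2 (Psi P) (θ r)
        = psSubst2 (PowerSeries.C (R := PowerSeries F) P + QQ θ P) (θ r) := by
  constructor
  · intro hit r
    refine ext2 fun i j => ?_
    rw [compA hP (θ r) i j, compB θ P hθ hP r i j]
    have h5 := hit.2.2.2.2 i j r
    simp only [] at h5
    rw [h5, nsmul_eq_mul]
  · intro hAB
    refine ⟨?_, ?_, ?_, ?_, ?_⟩
    · show psSubst P (θ 1) = 1
      rw [hθ.1, psSubst_one]
    · intro a b
      show psSubst P (θ (a + b)) = psSubst P (θ a) + psSubst P (θ b)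
      rw [hθ.2.1, psSubst_add]
    · intro a b
      show psSubst P (θ (a * b)) = psSubst P (θ a) * psSubst P (θ b)
      rw [hθ.2.2.1, psSubst_mul hP]
    · intro r
      exact coeff_zero_tld θ P hθ r
    · intro i j r
      have h := congrArg (co i j) (hAB r)
      rw [compA hP (θ r) i j, compB θ P hθ hP r i j] at h
      show coeff i (psSubst P (θ (coeff j (psSubst P (θ r)))))
        = (i + j).choose i • coeff (i + j) (psSubst P (θ r))
      rw [nsmul_eq_mul]
      exact h.symm

/-! ### order machinery in F⟦U⟧⟦T⟧ -/

def ordAL (n : ℕ) (W : PowerSeries (PowerSeries F)) : Prop :=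
  ∀ i j : ℕ, i + j < n → co i j W = 0

theorem ordAL_zero (W : PowerSeries (PowerSeries F)) : ordAL 0 W :=
  fun _ _ h => absurd h (Nat.not_lt_zero _)

theorem ordAL_mono {m n : ℕ} (h : m ≤ n) {W : PowerSeries (PowerSeries F)}
    (hW : ordAL n W) : ordAL m W := fun i j hij => hW i j (by omega)

theorem ordAL_mul {m n : ℕ} {V W : PowerSeries (PowerSeries F)}
    (hV : ordAL m V) (hW : ordAL n W) : ordAL (m + n) (V * W) := by
  intro i j hij
  rw [co_mul]
  refine Finset.sum_eq_zero fun s hs => Finset.sum_eq_zero fun p hp => ?_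
  have hs' := Finset.HasAntidiagonal.mem_antidiagonal.mp hs
  have hp' := Finset.HasAntidiagonal.mem_antidiagonal.mp hp
  by_cases h : p.1 + s.1 < m
  · rw [hV _ _ h, zero_mul]
  · rw [hW _ _ (by omega), mul_zero]

theorem ordAL_pow {n : ℕ} {W : PowerSeries (PowerSeries F)} (hW : ordAL n W) (k : ℕ) :
    ordAL (k * n) (W ^ k) := by
  induction k with
  | zero => simpa using ordAL_zero 1
  | succ k ih =>
      rw [pow_succ, show (k + 1) * n = k * n + n by ring]
      exact ordAL_mul ih hW

theorem ordAL_pow' {W : PowerSeries (PowerSeries F)} (hW : ordAL 1 W) (k : ℕ) :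
    ordAL k (W ^ k) := by
  have := ordAL_pow hW k
  rwa [Nat.mul_one] at this

theorem ordAL_CC_mul {n : ℕ} (x : F) {W : PowerSeries (PowerSeries F)} (hW : ordAL n W) :
    ordAL n (PowerSeries.C (R := PowerSeries F) (PowerSeries.C (R := F) x) * W) := by
  intro i j hij
  rw [co_CC_mul, hW i j hij, mul_zero]

noncomputable def pihom (n : ℕ) (W : PowerSeries (PowerSeries F)) : Polynomial F :=
  ∑ i ∈ range (n + 1), Polynomial.C (co i (n - i) W) * Polynomial.X ^ i

theorem coeff_pihom (n : ℕ) (W : PowerSeries (PowerSeries F)) (m : ℕ) :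
    (pihom n W).coeff m = if m ≤ n then co m (n - m) W else 0 := by
  rw [pihom, Polynomial.finset_sum_coeff]
  by_cases h : m ≤ n
  · rw [if_pos h, Finset.sum_eq_single m]
    · simp
    · intro b _ hb
      simp [Polynomial.coeff_C_mul, Polynomial.coeff_X_pow, Ne.symm hb]
    · intro hm
      exact absurd (Finset.mem_range.mpr (by omega)) hm
  · rw [if_neg h]
    refine Finset.sum_eq_zero fun b hb => ?_
    have hb' : m ≠ b := by
      have := Finset.mem_range.mp hb; omega
    simp [Polynomial.coeff_C_mul, Polynomial.coeff_X_pow, hb']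

theorem pihom_mul {m n : ℕ} {V W : PowerSeries (PowerSeries F)}
    (hV : ordAL m V) (hW : ordAL n W) :
    pihom (m + n) (V * W) = pihom m V * pihom n W := by
  ext t
  rw [coeff_pihom, Polynomial.coeff_mul]
  by_cases ht : t ≤ m + n
  · rw [if_pos ht, co_mul, Finset.sum_comm]
    refine Finset.sum_congr rfl fun p hp => ?_
    have hp' := Finset.HasAntidiagonal.mem_antidiagonal.mp hp
    rw [coeff_pihom, coeff_pihom]
    by_cases h1 : p.1 ≤ m
    · by_cases h2 : p.2 ≤ n
      · rw [if_pos h1, if_pos h2]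
        rw [Finset.sum_eq_single (m - p.1, n - p.2)]
        · intro s hs hne
          have hs' := Finset.HasAntidiagonal.mem_antidiagonal.mp hs
          by_cases hc : p.1 + s.1 < m
          · rw [hV _ _ hc, zero_mul]
          · have hlt : p.2 + s.2 < n := by
              have hne' : s.1 ≠ m - p.1 ∨ s.2 ≠ n - p.2 := by
                by_contra hcon
                push_neg at hcon
                exact hne (Prod.ext hcon.1 hcon.2)
              omega
            rw [hW _ _ hlt, mul_zero]
        · intro habs
          exact absurd (Finset.HasAntidiagonal.mem_antidiagonal.mpr (by omega)) habs
      · rw [if_neg h2, mul_zero]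
        refine Finset.sum_eq_zero fun s hs => ?_
        have hs' := Finset.HasAntidiagonal.mem_antidiagonal.mp hs
        rw [hV _ _ (by omega), zero_mul]
    · rw [if_neg h1, zero_mul]
      refine Finset.sum_eq_zero fun s hs => ?_
      have hs' := Finset.HasAntidiagonal.mem_antidiagonal.mp hs
      rw [hW _ _ (by omega), mul_zero]
  · rw [if_neg ht]
    symm
    refine Finset.sum_eq_zero fun p hp => ?_
    have hp' := Finset.HasAntidiagonal.mem_antidiagonal.mp hp
    have hor : ¬(p.1 ≤ m) ∨ ¬(p.2 ≤ n) := by omega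
    rcases hor with h | h
    · rw [coeff_pihom, if_neg h, zero_mul]
    · rw [coeff_pihom n, if_neg h, mul_zero]

theorem pihom_one : pihom 0 (1 : PowerSeries (PowerSeries F)) = 1 := by
  rw [pihom]
  simp [co_one]

theorem pihom_pow {n : ℕ} {W : PowerSeries (PowerSeries F)} (hW : ordAL n W) (k : ℕ) :
    pihom (k * n) (W ^ k) = (pihom n W) ^ k := by
  induction k with
  | zero => simpa using pihom_one
  | succ k ih =>
      rw [pow_succ, show (k + 1) * n = k * n + n by ring,
        pihom_mul (ordAL_pow hW k) hW, ih, pow_succ]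

theorem pihom_eq_zero_of_ordAL {n : ℕ} {W : PowerSeries (PowerSeries F)}
    (h : ordAL n W) {m : ℕ} (hm : m < n) : pihom m W = 0 := by
  rw [pihom]
  refine Finset.sum_eq_zero fun i hi => ?_
  have hi' := Finset.mem_range.mp hi
  rw [h i (m - i) (by omega), map_zero, zero_mul]

theorem pihom_sum {α : Type*} (s : Finset α) (f : α → PowerSeries (PowerSeries F)) (n : ℕ) :
    pihom n (∑ x ∈ s, f x) = ∑ x ∈ s, pihom n (f x) := by
  unfold pihom
  rw [Finset.sum_comm]
  refine Finset.sum_congr rfl fun i _ => ?_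
  rw [co_sum, map_sum, Finset.sum_mul]

theorem co_zero_zero_CC (x : F) :
    co 0 0 (PowerSeries.C (R := PowerSeries F) (PowerSeries.C (R := F) x)) = x := by
  simp [co, PowerSeries.coeff_C]

theorem pihom_zero_CC (x : F) :
    pihom 0 (PowerSeries.C (R := PowerSeries F) (PowerSeries.C (R := F) x)) = Polynomial.C x := by
  rw [pihom]
  simp [co_zero_zero_CC]

theorem pihom_zero_arg (n : ℕ) : pihom n (0 : PowerSeries (PowerSeries F)) = 0 := by
  simp [pihom, co]

theorem natCast_CC (m : ℕ) :
    ((m : ℕ) : PowerSeries (PowerSeries F))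
      = PowerSeries.C (R := PowerSeries F) (PowerSeries.C (R := F) (m : F)) := by
  rw [← map_natCast ((PowerSeries.C (R := PowerSeries F)).comp (PowerSeries.C (R := F))) m]
  rfl

/-! ### the hard direction -/

theorem hard {F : Type*} [Field F] (θ : F → PowerSeries F) (P : PowerSeries F)
    (hθ : IsIterativeDerivation θ) (hnt : ∃ f : F, θ f ≠ PowerSeries.C (R := F) f)
    (hP : constantCoeff P = 0)
    (hAB : ∀ r : F, psSubst2 (Psi P) (θ r)
      = psSubst2 (PowerSeries.C (R := PowerSeries F) P + QQ θ P) (θ r)) :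
    Psi P = PowerSeries.C (R := PowerSeries F) P + QQ θ P := by
  classical
  by_contra hne
  set A : PowerSeries (PowerSeries F) := Psi P with hA
  set B : PowerSeries (PowerSeries F) := PowerSeries.C (R := PowerSeries F) P + QQ θ P with hB
  set D : PowerSeries (PowerSeries F) := A - B with hDdef
  have hD : D ≠ 0 := sub_ne_zero.mpr hne
  -- the minimal index q with θ^{(q)} ≠ 0
  have hq_ex : ∃ n : ℕ, 0 < n ∧ ∃ f : F, coeff n (θ f) ≠ 0 := by
    obtain ⟨f, hf⟩ := hnt
    have hex : ∃ n, coeff n (θ f) ≠ coeff n (PowerSeries.C (R := F) f) := by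
      by_contra hc
      push_neg at hc
      exact hf (PowerSeries.ext hc)
    obtain ⟨n, hn⟩ := hex
    have hn0 : n ≠ 0 := by
      intro h
      subst h
      exact hn (by rw [hθ.2.2.2.1 f, PowerSeries.coeff_zero_C])
    refine ⟨n, Nat.pos_of_ne_zero hn0, f, ?_⟩
    rw [PowerSeries.coeff_C, if_neg hn0] at hn
    exact hn
  set q := Nat.find hq_ex with hqdef
  obtain ⟨hq_pos, f1, hf1⟩ := Nat.find_spec hq_ex
  have hq_min : ∀ m : ℕ, 0 < m → m < q → ∀ f : F, coeff m (θ f) = 0 := by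
    intro m hm hmq f
    by_contra hc
    exact (Nat.find_min hq_ex hmq) ⟨hm, f, hc⟩
  -- basic order facts
  have co00A : co 0 0 A = 0 := by
    rw [hA, co_Psi]
    simp [PowerSeries.coeff_zero_eq_constantCoeff, hP]
  have co00B : co 0 0 B = 0 := by
    rw [hB, co_add]
    have h1 : co 0 0 (PowerSeries.C (R := PowerSeries F) P) = 0 := by
      simp [co, PowerSeries.coeff_C, PowerSeries.coeff_zero_eq_constantCoeff, hP]
    have h2 : co 0 0 (QQ θ P) = 0 := by
      rw [co, QQ, coeff_mk, coeff_zero_tld θ P hθ,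
        PowerSeries.coeff_zero_eq_constantCoeff]
      exact hP
    rw [h1, h2, add_zero]
  have ordA1 : ordAL 1 A := by
    intro i j hij
    have hij' : i = 0 ∧ j = 0 := by omega
    obtain ⟨rfl, rfl⟩ := hij'
    exact co00A
  have ordB1 : ordAL 1 B := by
    intro i j hij
    have hij' : i = 0 ∧ j = 0 := by omega
    obtain ⟨rfl, rfl⟩ := hij'
    exact co00B
  -- the order of D
  have hd_ex : ∃ n : ℕ, ∃ ij : ℕ × ℕ, ij.1 + ij.2 = n ∧ co ij.1 ij.2 D ≠ 0 := by
    have hex : ∃ j i, co i j D ≠ 0 := by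
      by_contra hc
      push_neg at hc
      refine hD (PowerSeries.ext fun j => PowerSeries.ext fun i => ?_)
      have hcji := hc j i
      rw [co] at hcji
      simpa using hcji
    obtain ⟨j, i, hij⟩ := hex
    exact ⟨i + j, (i, j), rfl, hij⟩
  set dm := Nat.find hd_ex with hdmdef
  obtain ⟨⟨i0, j0⟩, hij0, hco0⟩ := Nat.find_spec hd_ex
  have hord : ordAL dm D := by
    intro i j hij
    by_contra hc
    exact Nat.find_min hd_ex hij ⟨(i, j), rfl, hc⟩
  have hdm_pos : 0 < dm := by
    rcases Nat.eq_zero_or_pos dm with h | h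
    · exfalso
      have hi0 : i0 = 0 ∧ j0 = 0 := by omega
      obtain ⟨rfl, rfl⟩ := hi0
      apply hco0
      rw [hDdef, co_sub, co00A, co00B, sub_zero]
    · exact h
  have hpiD : pihom dm D ≠ 0 := by
    intro hpi
    apply hco0
    have h1 : (pihom dm D).coeff i0 = co i0 (dm - i0) D := by
      rw [coeff_pihom, if_pos (by omega)]
    rw [hpi] at h1
    have h2 : dm - i0 = j0 := by omega
    rw [h2] at h1
    simpa using h1.symm
  -- combined vanishing coming from the hypothesis hAB
  have ordAk : ∀ k, ordAL k (A ^ k) := fun k => ordAL_pow' ordA1 k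
  have ordBk : ∀ k, ordAL k (B ^ k) := fun k => ordAL_pow' ordB1 k
  have hsum0 : ∀ (r : F) (N i j : ℕ), i + j < N →
      ∑ k ∈ range N, coeff k (θ r) * (co i j (A ^ k) - co i j (B ^ k)) = 0 := by
    intro r N i j hij
    have hco := congrArg (co i j) (hAB r)
    rw [co_psSubst2, co_psSubst2] at hco
    have split : ∑ k ∈ range N, coeff k (θ r) * (co i j (A ^ k) - co i j (B ^ k))
        = ∑ k ∈ range (i + j + 1), coeff k (θ r) * (co i j (A ^ k) - co i j (B ^ k)) := by
      symm
      apply Finset.sum_subset (Finset.range_subset_range.mpr (by omega))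
      intro k _ hk
      have hk' : i + j < k := by
        have := Finset.mem_range.not.mp hk
        omega
      rw [ordAk k i j hk', ordBk k i j hk']
      simp
    rw [split]
    simp only [mul_sub]
    rw [Finset.sum_sub_distrib]
    rw [sub_eq_zero]
    exact hco
  -- the auxiliary series Tr
  set E := q * dm with hE
  set N := E + 1 with hN
  set Tr : PowerSeries (PowerSeries F) := ∑ k ∈ range N,
      PowerSeries.C (R := PowerSeries F) (PowerSeries.C (R := F) (coeff k (θ f1))) * (A ^ k - B ^ k)
    with hTr
  have hordT : ordAL N Tr := by
    intro i j hij
    rw [hTr, co_sum]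
    have : ∀ k ∈ range N,
        co i j (PowerSeries.C (R := PowerSeries F) (PowerSeries.C (R := F) (coeff k (θ f1)))
          * (A ^ k - B ^ k))
        = coeff k (θ f1) * (co i j (A ^ k) - co i j (B ^ k)) := by
      intro k _
      rw [co_CC_mul, co_sub]
    rw [Finset.sum_congr rfl this]
    exact hsum0 f1 N i j hij
  have hpiT0 : pihom E Tr = 0 := pihom_eq_zero_of_ordAL hordT (by omega)
  -- expand A^k - B^k in terms of D
  have hBD : A = B + D := by
    rw [hDdef]
    ring
  have hAk : ∀ k : ℕ, A ^ k - B ^ k = ∑ i' ∈ range k,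
      D ^ (i' + 1) * B ^ (k - (i' + 1)) * ((k.choose (i' + 1) : ℕ) :
        PowerSeries (PowerSeries F)) := by
    intro k
    have h1 : A ^ k = ∑ i' ∈ range (k + 1),
        D ^ i' * B ^ (k - i') * ((k.choose i' : ℕ) : PowerSeries (PowerSeries F)) := by
      rw [hBD, add_comm B D, add_pow]
    rw [h1, Finset.sum_range_succ']
    simp only [pow_zero, one_mul, Nat.choose_zero_right, Nat.cast_one, mul_one, Nat.sub_zero]
    exact add_sub_cancel_right _ _
  have iter2 : ∀ k i' : ℕ, i' < k →
      coeff (i' + 1) (θ (coeff (k - (i' + 1)) (θ f1)))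
        = (k.choose (i' + 1) : F) * coeff k (θ f1) := by
    intro k i' h
    have h5 := hθ.2.2.2.2 (i' + 1) (k - (i' + 1)) f1
    rw [h5, show i' + 1 + (k - (i' + 1)) = k by omega, nsmul_eq_mul]
  have hterm : Tr = ∑ k ∈ range N, ∑ i' ∈ range k,
      PowerSeries.C (R := PowerSeries F)
          (PowerSeries.C (R := F) (coeff (i' + 1) (θ (coeff (k - (i' + 1)) (θ f1))))) *
        (D ^ (i' + 1) * B ^ (k - (i' + 1))) := by
    rw [hTr]
    refine Finset.sum_congr rfl fun k _ => ?_
    rw [hAk k, Finset.mul_sum]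
    refine Finset.sum_congr rfl fun i' hi' => ?_
    rw [iter2 k i' (Finset.mem_range.mp hi'), natCast_CC, map_mul, map_mul]
    ring
  -- compute pihom E of each term
  have hpi_term : ∀ k, ∀ i' < k, (k ≠ q ∨ i' ≠ q - 1) →
      pihom E (PowerSeries.C (R := PowerSeries F)
          (PowerSeries.C (R := F) (coeff (i' + 1) (θ (coeff (k - (i' + 1)) (θ f1))))) *
        (D ^ (i' + 1) * B ^ (k - (i' + 1)))) = 0 := by
    intro k i' hik hne
    by_cases hlt : i' + 1 < q
    · rw [hq_min (i' + 1) (by omega) hlt]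
      simp [pihom_zero_arg]
    · -- i' + 1 ≥ q and not the main term: high order
      have hordterm : ordAL ((i' + 1) * dm + (k - (i' + 1)))
          (D ^ (i' + 1) * B ^ (k - (i' + 1))) :=
        ordAL_mul (ordAL_pow hord (i' + 1)) (ordBk (k - (i' + 1)))
      have hordterm' : ordAL ((i' + 1) * dm + (k - (i' + 1)))
          (PowerSeries.C (R := PowerSeries F)
            (PowerSeries.C (R := F) (coeff (i' + 1) (θ (coeff (k - (i' + 1)) (θ f1))))) *
          (D ^ (i' + 1) * B ^ (k - (i' + 1)))) := ordAL_CC_mul _ hordterm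
      refine pihom_eq_zero_of_ordAL hordterm' ?_
      -- show E < (i'+1)*dm + (k - (i'+1))
      by_cases hq1 : i' + 1 = q
      · have hkq : k ≠ q := by
          rcases hne with h | h
          · exact h
          · omega
        have h6 : 1 ≤ k - (i' + 1) := by omega
        have h7 : (i' + 1) * dm = q * dm := by rw [hq1]
        omega
      · have hq2 : q + 1 ≤ i' + 1 := by omega
        have hmul : (q + 1) * dm ≤ (i' + 1) * dm := Nat.mul_le_mul_right dm hq2
        have hqd : (q + 1) * dm = q * dm + dm := by ring
        omega
    -- note: ordAk works since B^m with ordAL 1 B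
  have hmain : pihom E Tr = Polynomial.C (coeff q (θ f1)) * (pihom dm D) ^ q := by
    rw [hterm, pihom_sum]
    rw [Finset.sum_eq_single q]
    · rw [pihom_sum, Finset.sum_eq_single (q - 1)]
      · have e1 : q - 1 + 1 = q := by omega
        have e2 : q - (q - 1 + 1) = 0 := by omega
        rw [e2, e1]
        rw [hθ.2.2.2.1 f1]
        rw [pow_zero, mul_one]
        have hD_pow : ordAL E (D ^ q) := by
          have := ordAL_pow hord q
          rwa [← hE] at this
        have := pihom_mul (m := 0) (n := E)
          (ordAL_zero (PowerSeries.C (R := PowerSeries F)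
            (PowerSeries.C (R := F) (coeff q (θ f1))))) hD_pow
        rw [zero_add] at this
        rw [this, pihom_zero_CC, hE, pihom_pow hord q]
      · intro i' hi' hne
        exact hpi_term q i' (Finset.mem_range.mp hi') (Or.inr hne)
      · intro habs
        exact absurd (Finset.mem_range.mpr (by omega)) habs
    · intro k hk hne
      rw [pihom_sum]
      refine Finset.sum_eq_zero fun i' hi' => ?_
      exact hpi_term k i' (Finset.mem_range.mp hi') (Or.inl hne)
    · intro habs
      refine absurd (Finset.mem_range.mpr ?_) habs
      have : q ≤ q * dm := Nat.le_mul_of_pos_right q hdm_pos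
      omega
  rw [hpiT0] at hmain
  have hC : Polynomial.C (coeff q (θ f1)) ≠ 0 := by
    simpa using hf1
  exact (mul_ne_zero hC (pow_ne_zero q hpiD)) hmain.symm

end Lemma33

/-- Lemma 3.3: for `θ̃ := λ ∘ θ` with `λ(T) = P`, the map `θ̃` is an iterative derivation
iff `P(U+T) = P(U) + θ̃_U⟦T⟧(P(T))` in `F⟦U⟧⟦T⟧`.  Here `U + T` is
`C U X + X ∈ F⟦U⟧⟦T⟧`, `P(U)` is the copy `C P` of `P` in the variable `U` (constant in `T`),
and `θ̃_U⟦T⟧` is the coefficientwise application of `θ̃` (with output variable `U`). -/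
theorem iterative_iff_additivity_of_P
    {F : Type*} [Field F] (p : ℕ) (hp : 0 < p) [CharP F p]
    (θ : F → PowerSeries F) (hθ : IsIterativeDerivation θ)
    (hnt : ∃ f : F, θ f ≠ PowerSeries.C f)
    (P : PowerSeries F) (hP : PowerSeries.constantCoeff P = 0) :
    IsIterativeDerivation (fun f => psSubst P (θ f)) ↔
      psSubst2 (PowerSeries.C (PowerSeries.X : PowerSeries F) + PowerSeries.X) P =
        PowerSeries.C P +
          PowerSeries.mk (fun n => psSubst P (θ (PowerSeries.coeff n P))) := by
  
  classical
  rw [Lemma33.A_eq_Psi hP]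
  have hQ : PowerSeries.mk (fun n => psSubst P (θ (PowerSeries.coeff n P)))
      = Lemma33.QQ θ P := rfl
  rw [hQ]
  rw [Lemma33.iter_iff θ P hθ hP]
  constructor
  · intro h
    exact Lemma33.hard θ P hθ hnt hP h
  · intro h r
    rw [h]
end

section
/- Let F be a field of characteristic p > 0 and let θ be a non-trivial iterative derivation on F. Let P₁, P₂ ∈ F⟦T⟧ both have constant coefficient 0 and nonzero coefficient of T^1, and suppose that PowerSeries.subst P₁ (θ f) = PowerSeries.subst P₂ (θ f) for all f ∈ F. Then P₁ = P₂. -/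
section AuxLemmasForProp35
open Nat

private theorem not_dvd_choose_of_digits (p : ℕ) (hp : p.Prime) :
    ∀ n k : ℕ, (∀ i, k / p ^ i % p ≤ n / p ^ i % p) → ¬ p ∣ n.choose k := by
  have : Fact p.Prime := ⟨hp⟩
  intro n
  induction n using Nat.strong_induction_on with
  | _ n ih =>
    intro k hdig hdvd
    rcases Nat.eq_zero_or_pos n with hn0 | hn0
    · subst hn0
      have hk0 : k = 0 := by
        by_contra hk
        have h1 : p ^ Nat.log p k ≤ k := Nat.pow_log_le_self p hk
        have h2 : k < p ^ (Nat.log p k + 1) := Nat.lt_pow_succ_log_self hp.one_lt k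
        have := hdig (Nat.log p k)
        rw [Nat.zero_div, Nat.zero_mod, Nat.le_zero] at this
        have hq1 : 1 ≤ k / p ^ Nat.log p k := (Nat.one_le_div_iff (Nat.pow_pos hp.pos)).2 h1
        have hq2 : k / p ^ Nat.log p k < p := by
          rw [Nat.div_lt_iff_lt_mul (Nat.pow_pos hp.pos), ← _root_.pow_succ']
          exact h2
        rw [Nat.mod_eq_of_lt hq2] at this
        omega
      rw [hk0, Nat.choose_self] at hdvd
      exact hp.one_lt.ne' (Nat.eq_one_of_dvd_one hdvd)
    · have hlucas := Choose.choose_modEq_choose_mod_mul_choose_div_nat (p := p) (n := n) (k := k)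
      have hdvd' : p ∣ (n % p).choose (k % p) * ((n / p).choose (k / p)) :=
        (Nat.modEq_zero_iff_dvd).1 (((Nat.modEq_zero_iff_dvd).2 hdvd).symm.trans hlucas).symm
      rcases (hp.dvd_mul).1 hdvd' with hA | hB
      · have hle : k % p ≤ n % p := by simpa using hdig 0
        have hfac : p ∣ (n % p)! := hA.trans
          ⟨(k % p)! * (n % p - k % p)!, by
            rw [← Nat.choose_mul_factorial_mul_factorial hle]; ring⟩
        have := (Nat.Prime.dvd_factorial hp).1 hfac
        exact absurd this (not_le.2 (Nat.mod_lt _ hp.pos))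
      · exact ih (n / p) (Nat.div_lt_self hn0 hp.one_lt) (k / p)
          (fun i => by
            have := hdig (i + 1)
            rw [_root_.pow_succ'] at this
            simpa [Nat.div_div_eq_div_mul] using this) hB

private theorem lucasL1 (p : ℕ) (hp : p.Prime) (s m a : ℕ) (ha : a < p ^ s) :
    ¬ p ∣ (p ^ s * m + a).choose a := by
  apply not_dvd_choose_of_digits p hp
  intro i
  rcases lt_or_ge i s with hi | hi
  · have hsi : i + (s - i) = s := by omega
    have key : p ^ s * m + a = p ^ i * (p ^ (s - i) * m) + a := by
      rw [← mul_assoc, ← pow_add, hsi]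
    rw [key, Nat.mul_add_div (Nat.pow_pos hp.pos)]
    have hsi1 : s - i - 1 + 1 = s - i := by omega
    have : p ^ (s - i) * m = p * (p ^ (s - i - 1) * m) := by
      rw [← mul_assoc, ← _root_.pow_succ', hsi1]
    rw [this, Nat.mul_add_mod]
  · have : a / p ^ i = 0 := Nat.div_eq_of_lt (lt_of_lt_of_le ha (Nat.pow_le_pow_right hp.pos hi))
    simp [this]

private theorem lucasL2 (p : ℕ) (hp : p.Prime) (t b : ℕ) (hb1 : 1 ≤ b) (hbp : b < p) :
    ¬ p ∣ (p ^ t * b).choose (p ^ t) := by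
  apply not_dvd_choose_of_digits p hp
  intro i
  rcases lt_trichotomy i t with hi | hi | hi
  · have hti : i + (t - i) = t := by omega
    have key : p ^ t = p ^ i * p ^ (t - i) := by rw [← pow_add, hti]
    rw [key, Nat.mul_div_cancel_left _ (Nat.pow_pos hp.pos)]
    have hti1 : t - i - 1 + 1 = t - i := by omega
    have : p ^ (t - i) = p * p ^ (t - i - 1) := by rw [← _root_.pow_succ', hti1]
    rw [this, Nat.mul_mod_right]
    exact Nat.zero_le _
  · subst hi
    rw [Nat.mul_div_cancel_left _ (Nat.pow_pos hp.pos),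
      Nat.div_self (Nat.pow_pos hp.pos), Nat.mod_eq_of_lt hp.one_lt,
      Nat.mod_eq_of_lt hbp]
    exact hb1
  · have : p ^ t / p ^ i = 0 := Nat.div_eq_of_lt (Nat.pow_lt_pow_right hp.one_lt hi)
    simp [this]

private theorem lucasL3 (p : ℕ) (hp : p.Prime) (n : ℕ) (hn : 0 < n) (hnp : ∀ t, n ≠ p ^ t) :
    ∃ i, 0 < i ∧ i < n ∧ ¬ p ∣ n.choose i := by
  set t := Nat.log p n with ht
  have h1 : p ^ t ≤ n := Nat.pow_log_le_self p hn.ne'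
  have h2 : n < p ^ (t + 1) := Nat.lt_pow_succ_log_self hp.one_lt n
  set b := n / p ^ t with hb
  set a := n % p ^ t with hab
  have hnb : n = p ^ t * b + a := (Nat.div_add_mod n (p ^ t)).symm
  have hb1 : 1 ≤ b := (Nat.one_le_div_iff (Nat.pow_pos hp.pos)).2 h1
  have hbp : b < p := by
    rw [hb, Nat.div_lt_iff_lt_mul (Nat.pow_pos hp.pos), ← _root_.pow_succ']
    exact h2
  rcases Nat.eq_zero_or_pos a with ha0 | ha0
  · have hbne : b ≠ 1 := fun hb1' => hnp t (by rw [hnb, hb1', ha0]; ring)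
    have hb2 : 2 ≤ b := by omega
    have hpt1 : 1 ≤ p ^ t := Nat.pow_pos hp.pos
    have hmul := Nat.mul_le_mul_left (p ^ t) hb2
    refine ⟨p ^ t, Nat.pow_pos hp.pos, ?_, ?_⟩
    · omega
    · have : n = p ^ t * b := by omega
      rw [this]
      exact lucasL2 p hp t b hb1 hbp
  · refine ⟨a, ha0, ?_, ?_⟩
    · have : a < p ^ t := Nat.mod_lt _ (Nat.pow_pos hp.pos)
      omega
    · rw [hnb]
      exact lucasL1 p hp t b a (Nat.mod_lt _ (Nat.pow_pos hp.pos))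

end AuxLemmasForProp35

/-- Proposition 3.5: the power series `P` realizing an equivalence of non-trivial
iterative derivations is unique. -/
theorem equivalence_series_unique
    {F : Type*} [Field F] (p : ℕ) (hp : 0 < p) [CharP F p]
    (θ : F → PowerSeries F) (hθ : IsIterativeDerivation θ)
    (hnt : ∃ f : F, θ f ≠ PowerSeries.C f)
    (P₁ P₂ : PowerSeries F)
    (hP₁0 : PowerSeries.constantCoeff P₁ = 0) (hP₁1 : PowerSeries.coeff 1 P₁ ≠ 0)
    (hP₂0 : PowerSeries.constantCoeff P₂ = 0) (hP₂1 : PowerSeries.coeff 1 P₂ ≠ 0)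
    (h : ∀ f : F, psSubst P₁ (θ f) = psSubst P₂ (θ f)) :
    P₁ = P₂ := by
  classical
  obtain ⟨-, -, -, h0, hiter⟩ := hθ
  have hpp : p.Prime := (CharP.char_is_prime_or_zero F p).resolve_right hp.ne'
  set D : ℕ → F → F := fun k f => PowerSeries.coeff k (θ f) with hD
  -- cast of binomial nonzero
  have hcast : ∀ n i : ℕ, ¬ p ∣ n.choose i → (n.choose i : F) ≠ 0 := fun n i hnd => by
    rwa [Ne, CharP.cast_eq_zero_iff F p]
  -- step A
  have key : ∀ n : ℕ, 0 < n → ∀ f : F, D n f ≠ 0 →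
      ∃ t : ℕ, p ^ t ≤ n ∧ ∃ g : F, D (p ^ t) g ≠ 0 := by
    intro n
    induction n using Nat.strong_induction_on with
    | _ n ih =>
      intro hn f hf
      by_cases hex : ∃ t, n = p ^ t
      · obtain ⟨t, rfl⟩ := hex
        exact ⟨t, le_rfl, f, hf⟩
      · push_neg at hex
        obtain ⟨i, hi0, hin, hnd⟩ := lucasL3 p hpp n hn hex
        have hit := hiter i (n - i) f
        have hin' : i + (n - i) = n := by omega
        rw [hin'] at hit
        have : D i (D (n - i) f) ≠ 0 := by
          rw [hD]
          simp only
          rw [hit, nsmul_eq_mul]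
          exact mul_ne_zero (hcast n i hnd) hf
        obtain ⟨t, hle, hg⟩ := ih i hin hi0 _ this
        exact ⟨t, le_trans hle hin.le, hg⟩
  -- existence of a nonzero p-power coefficient
  have hex : ∃ s : ℕ, ∃ g : F, D (p ^ s) g ≠ 0 := by
    obtain ⟨f, hf⟩ := hnt
    have : ∃ k, PowerSeries.coeff k (θ f) ≠ PowerSeries.coeff k (PowerSeries.C f) := by
      by_contra hc
      push_neg at hc
      exact hf (PowerSeries.ext hc)
    obtain ⟨k, hk⟩ := this
    have hk0 : k ≠ 0 := by
      intro h0'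
      subst h0'
      rw [PowerSeries.coeff_zero_C] at hk
      exact hk (h0 f)
    rw [PowerSeries.coeff_C, if_neg hk0] at hk
    obtain ⟨t, -, g, hg⟩ := key k (Nat.pos_of_ne_zero hk0) f hk
    exact ⟨t, g, hg⟩
  set s := Nat.find hex with hs
  set q := p ^ s with hq
  have hq1 : 1 ≤ q := Nat.pow_pos hpp.pos
  obtain ⟨f, hfq⟩ : ∃ g : F, D q g ≠ 0 := Nat.find_spec hex
  -- step C: vanishing below q
  have vanish_lt : ∀ k, 0 < k → k < q → ∀ g : F, D k g = 0 := by
    intro k hk0 hkq g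
    by_contra hg
    obtain ⟨t, hle, hg'⟩ := key k hk0 g hg
    have : t < s := by
      have h1 : p ^ t < p ^ s := lt_of_le_of_lt hle hkq
      exact (Nat.pow_lt_pow_iff_right hpp.one_lt).1 h1
    exact Nat.find_min hex this hg'
  -- step D: vanishing off multiples of q
  have vanish_ndvd : ∀ n, ¬ q ∣ n → ∀ g : F, D n g = 0 := by
    intro n hndvd g
    set a := n % q with ha
    have ha0 : 0 < a := Nat.pos_of_ne_zero (fun h' => hndvd (Nat.dvd_of_mod_eq_zero h'))
    have haq : a < q := Nat.mod_lt _ hq1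
    have han : a ≤ n := Nat.mod_le _ _
    have hit := hiter a (n - a) g
    have han' : a + (n - a) = n := by omega
    rw [han'] at hit
    have hlhs : D a (D (n - a) g) = 0 := vanish_lt a ha0 haq _
    rw [hD] at hlhs
    simp only at hlhs
    rw [hit, nsmul_eq_mul] at hlhs
    have hnd : ¬ p ∣ n.choose a := by
      have hdm : n = p ^ s * (n / q) + a := by
        rw [← hq, ha]
        exact (Nat.div_add_mod n q).symm
      rw [hdm]
      exact lucasL1 p hpp s (n / q) a (by rw [← hq]; exact haq)
    rcases mul_eq_zero.1 hlhs with h' | h'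
    · exact absurd h' (hcast n a hnd)
    · exact h'
  -- step E
  by_contra hne
  have hexm : ∃ m, PowerSeries.coeff m (P₁ - P₂) ≠ 0 := by
    by_contra hc
    push_neg at hc
    exact hne (sub_eq_zero.1 (PowerSeries.ext (by simpa using hc)))
  set m := Nat.find hexm with hm
  have hcm : PowerSeries.coeff m (P₁ - P₂) ≠ 0 := Nat.find_spec hexm
  have hmlt : ∀ i < m, PowerSeries.coeff i (P₁ - P₂) = 0 := fun i hi => by
    by_contra h'
    exact Nat.find_min hexm hi h'
  have hm1 : 1 ≤ m := by
    rcases Nat.eq_zero_or_pos m with h' | h'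
    · exfalso
      apply hcm
      rw [h', map_sub, PowerSeries.coeff_zero_eq_constantCoeff, hP₁0, hP₂0, sub_zero]
    · exact h'
  obtain ⟨E, hE⟩ : (PowerSeries.X : PowerSeries F) ^ m ∣ (P₁ - P₂) :=
    PowerSeries.X_pow_dvd_iff.2 hmlt
  have hc0 : PowerSeries.coeff 0 E ≠ 0 := by
    intro h'
    apply hcm
    rw [hE]
    have := PowerSeries.coeff_X_pow_mul E m 0
    rw [zero_add] at this
    rw [this, h']
  haveI : Fact p.Prime := ⟨hpp⟩
  have hq0 : q ≠ 0 := by omega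
  haveI : CharP (PowerSeries F) p := by
    constructor
    intro n
    rw [← map_natCast (PowerSeries.C (R := F)) n,
      map_eq_zero_iff _ (fun a b hab => by simpa using congrArg (PowerSeries.constantCoeff (R := F)) hab)]
    exact CharP.cast_eq_zero_iff F p n
  have hfrob : P₁ ^ q - P₂ ^ q = PowerSeries.X ^ (q * m) * E ^ q := by
    rw [← sub_pow_char_pow (p := p), hE, mul_pow, ← pow_mul, mul_comm m q]
  -- the coefficient identity at q*m
  have hsum : ∀ g : F, ∑ k ∈ Finset.range (q * m + 1),
      PowerSeries.coeff k (θ g) *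
        (PowerSeries.coeff (q * m) (P₁ ^ k) - PowerSeries.coeff (q * m) (P₂ ^ k)) = 0 := by
    intro g
    have := congrArg (PowerSeries.coeff (q * m)) (h g)
    simp only [psSubst, PowerSeries.coeff_mk] at this
    simp only [mul_sub]
    rw [Finset.sum_sub_distrib, this, sub_self]
  have hsum' := hsum f
  rw [Finset.sum_eq_single q] at hsum'
  · -- main term nonzero
    apply hfq
    have hterm : PowerSeries.coeff (q * m) (P₁ ^ q) - PowerSeries.coeff (q * m) (P₂ ^ q) =
        (PowerSeries.coeff 0 E) ^ q := by
      rw [← map_sub, hfrob]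
      have := PowerSeries.coeff_X_pow_mul (E ^ q) (q * m) 0
      rw [zero_add] at this
      rw [this, PowerSeries.coeff_zero_eq_constantCoeff, map_pow,
        ← PowerSeries.coeff_zero_eq_constantCoeff_apply]
    rw [hterm] at hsum'
    have := mul_eq_zero.1 hsum'
    rcases this with h' | h'
    · exact h'
    · exact absurd h' (pow_ne_zero _ hc0)
  · -- other terms vanish
    intro k hk hkq
    rcases Nat.eq_zero_or_pos k with rfl | hk0
    · simp
    by_cases hdvd : q ∣ k
    · obtain ⟨j, rfl⟩ := hdvd
      have hj2 : 2 ≤ j := by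
        rcases Nat.lt_or_ge j 2 with h' | h'
        · exfalso
          interval_cases j
          · simp at hk0
          · simp at hkq
        · exact h'
      have hcoeff : PowerSeries.coeff (q * m) (P₁ ^ (q * j)) -
          PowerSeries.coeff (q * m) (P₂ ^ (q * j)) = 0 := by
        rw [← map_sub]
        have hdvdX : (PowerSeries.X : PowerSeries F) ^ (q * m + 1) ∣
            (P₁ ^ (q * j) - P₂ ^ (q * j)) := by
          have hgeom := geom_sum₂_mul (P₁ ^ q) (P₂ ^ q) j
          have heq : P₁ ^ (q * j) - P₂ ^ (q * j) =
              (∑ i ∈ Finset.range j, (P₁ ^ q) ^ i * (P₂ ^ q) ^ (j - 1 - i)) *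
                (P₁ ^ q - P₂ ^ q) := by
            rw [hgeom, ← pow_mul, ← pow_mul]
          rw [heq, pow_succ, mul_comm ((PowerSeries.X : PowerSeries F) ^ (q * m)) _]
          apply mul_dvd_mul
          · apply Finset.dvd_sum
            intro i hi
            rcases Nat.eq_zero_or_pos i with rfl | hi0
            · apply Dvd.dvd.mul_left
              apply dvd_pow
              · apply dvd_pow (PowerSeries.X_dvd_iff.2 hP₂0) hq0
              · omega
            · apply Dvd.dvd.mul_right
              apply dvd_pow
              · apply dvd_pow (PowerSeries.X_dvd_iff.2 hP₁0) hq0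
              · omega
          · rw [hfrob]
            exact Dvd.intro _ rfl
        have := PowerSeries.X_pow_dvd_iff.1 hdvdX (q * m) (by omega)
        exact this
      rw [hcoeff, mul_zero]
    · rw [show PowerSeries.coeff k (θ f) = D k f from rfl, vanish_ndvd k hdvd f, zero_mul]
  · -- q ∈ range
    intro hq'
    exfalso
    apply hq'
    rw [Finset.mem_range]
    have : q * 1 ≤ q * m := Nat.mul_le_mul_left q hm1
    omega
end

section
/- Let F be a field of characteristic p > 0 with an iterative derivation θ such that θ^{(1)} is not the zero map, and let t ∈ F with θ^{(1)}(t) ≠ 0. Let Q := θ(t) − C(t) ∈ F⟦T⟧ (a power series with constant coefficient 0 and coefficient of T^1 equal to θ^{(1)}(t) ≠ 0), and let P ∈ F⟦T⟧ be the compositional inverse of Q, i.e. the power series with constant coefficient 0 satisfying PowerSeries.subst Q P = T. Then the map θ̃ : F → F⟦T⟧ defined by θ̃(f) := PowerSeries.subst P (θ f) is an iterative derivation on F, and θ̃(t) = C(t) + T. -/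
namespace psAux
open PowerSeries
variable {R : Type*} [CommRing R]

theorem coeff_pow_eq_zero {P : R⟦X⟧} (hP0 : constantCoeff (R := R) P = 0) :
    ∀ {k n : ℕ}, n < k → coeff (R := R) n (P ^ k) = 0 := by
  intro k
  induction k with
  | zero => intro n h; omega
  | succ k ih =>
    intro n h
    rw [pow_succ, mul_comm, coeff_mul]
    apply Finset.sum_eq_zero
    rintro ⟨a, b⟩ hab
    rw [Finset.HasAntidiagonal.mem_antidiagonal] at hab
    rcases Nat.eq_zero_or_pos a with ha | ha
    · subst ha
      rw [show (0 : ℕ) = (0 : ℕ) from rfl]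
      simp only [coeff_zero_eq_constantCoeff, hP0, zero_mul]
    · have : b < k := by omega
      rw [ih this, mul_zero]

theorem coeff_psSubst (P g : R⟦X⟧) (n : ℕ) :
    coeff (R := R) n (psSubst P g) = ∑ k ∈ Finset.range (n + 1), coeff (R := R) k g * coeff (R := R) n (P ^ k) :=
  coeff_mk _ _

theorem coeff_psSubst_ext {P : R⟦X⟧} (hP0 : constantCoeff (R := R) P = 0) (g : R⟦X⟧) {n N : ℕ}
    (hN : n < N) :
    coeff (R := R) n (psSubst P g) = ∑ k ∈ Finset.range N, coeff (R := R) k g * coeff (R := R) n (P ^ k) := by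
  rw [coeff_psSubst]
  apply Finset.sum_subset
  · intro x hx
    simp only [Finset.mem_range] at hx ⊢; omega
  · intro x _ hx
    simp only [Finset.mem_range, not_lt] at hx
    rw [coeff_pow_eq_zero hP0 (by omega), mul_zero]

theorem coeff_eval₂ {P : R⟦X⟧} (hP0 : constantCoeff (R := R) P = 0) (q : Polynomial R) (n : ℕ) :
    coeff (R := R) n (Polynomial.eval₂ (C (R := R)) P q) =
      ∑ k ∈ Finset.range (n + 1), q.coeff k * coeff (R := R) n (P ^ k) := by
  have hq : q.natDegree < q.natDegree + n + 2 := by omega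
  rw [Polynomial.eval₂_eq_sum_range' (C (R := R)) hq P, map_sum]
  have : ∀ k, coeff (R := R) n (C (R := R) (q.coeff k) * P ^ k) = q.coeff k * coeff (R := R) n (P ^ k) := by
    intro k; rw [coeff_C_mul]
  simp only [this]
  symm
  apply Finset.sum_subset
  · intro x hx; simp only [Finset.mem_range] at hx ⊢; omega
  · intro x _ hx
    simp only [Finset.mem_range, not_lt] at hx
    rw [coeff_pow_eq_zero hP0 (by omega), mul_zero]

theorem coeff_psSubst_eq_eval₂ {P : R⟦X⟧} (hP0 : constantCoeff (R := R) P = 0) (g : R⟦X⟧) {n N : ℕ}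
    (hN : n < N) :
    coeff (R := R) n (psSubst P g) = coeff (R := R) n (Polynomial.eval₂ (C (R := R)) P (trunc N g)) := by
  rw [coeff_eval₂ hP0, coeff_psSubst]
  apply Finset.sum_congr rfl
  intro k hk
  simp only [Finset.mem_range] at hk
  rw [coeff_trunc, if_pos (by omega)]

theorem psSubst_add (P g h : R⟦X⟧) : psSubst P (g + h) = psSubst P g + psSubst P h := by
  ext n
  simp only [coeff_psSubst, map_add, add_mul, Finset.sum_add_distrib]

theorem psSubst_sub (P g h : R⟦X⟧) : psSubst P (g - h) = psSubst P g - psSubst P h := by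
  ext n
  simp only [coeff_psSubst, map_sub, sub_mul, Finset.sum_sub_distrib]

theorem psSubst_C (P : R⟦X⟧) (a : R) : psSubst P (C (R := R) a) = C (R := R) a := by
  ext n
  rw [coeff_psSubst]
  rcases Nat.eq_zero_or_pos n with hn | hn
  · subst hn; simp
  · rw [Finset.sum_eq_zero, coeff_C, if_neg (by omega)]
    intro k hk
    rcases Nat.eq_zero_or_pos k with h0 | h0
    · subst h0; simp only [pow_zero, coeff_one, mul_ite, mul_one, mul_zero]
      rw [if_neg (by omega)]
    · rw [coeff_C, if_neg (by omega), zero_mul]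

theorem psSubst_one (P : R⟦X⟧) : psSubst P 1 = 1 := by
  have := psSubst_C P 1
  rwa [map_one] at this

theorem psSubst_X {P : R⟦X⟧} (hP0 : constantCoeff (R := R) P = 0) : psSubst P X = P := by
  ext n
  rw [coeff_psSubst_ext hP0 _ (show n < n + 2 by omega)]
  rw [Finset.sum_eq_single 1]
  · simp
  · intro k _ hk; rw [coeff_X, if_neg hk, zero_mul]
  · intro h; simp at h

theorem psSubst_X_left (g : R⟦X⟧) : psSubst X g = g := by
  ext n
  rw [coeff_psSubst, Finset.sum_eq_single n]
  · rw [coeff_X_pow, if_pos rfl, mul_one]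
  · intro k hk hkn
    rw [coeff_X_pow, if_neg (fun h => hkn h.symm), mul_zero]
  · intro h; simp at h

theorem constantCoeff_psSubst (P g : R⟦X⟧) :
    coeff (R := R) 0 (psSubst P g) = coeff (R := R) 0 g := by
  rw [coeff_psSubst]
  simp

theorem coeff_psSubst_congr (P : R⟦X⟧) {g h : R⟦X⟧} {n : ℕ}
    (hgh : ∀ k ≤ n, coeff (R := R) k g = coeff (R := R) k h) :
    coeff (R := R) n (psSubst P g) = coeff (R := R) n (psSubst P h) := by
  rw [coeff_psSubst, coeff_psSubst]
  apply Finset.sum_congr rfl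
  intro k hk
  simp only [Finset.mem_range] at hk
  rw [hgh k (by omega)]

theorem psSubst_mul {P : R⟦X⟧} (hP0 : constantCoeff (R := R) P = 0) (g h : R⟦X⟧) :
    psSubst P (g * h) = psSubst P g * psSubst P h := by
  ext n
  rw [coeff_psSubst_eq_eval₂ hP0 _ (show n < 2 * n + 2 by omega)]
  have key : coeff (R := R) n (Polynomial.eval₂ (C (R := R)) P (trunc (2 * n + 2) (g * h))) =
      coeff (R := R) n (Polynomial.eval₂ (C (R := R)) P (trunc (n + 1) g * trunc (n + 1) h)) := by
    rw [coeff_eval₂ hP0, coeff_eval₂ hP0]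
    apply Finset.sum_congr rfl
    intro k hk
    simp only [Finset.mem_range] at hk
    congr 1
    rw [coeff_trunc, if_pos (by omega), Polynomial.coeff_mul, coeff_mul]
    apply Finset.sum_congr rfl
    rintro ⟨a, b⟩ hab
    rw [Finset.HasAntidiagonal.mem_antidiagonal] at hab
    rw [coeff_trunc, coeff_trunc, if_pos (by omega), if_pos (by omega)]
  rw [key, Polynomial.eval₂_mul, coeff_mul, coeff_mul]
  apply Finset.sum_congr rfl
  rintro ⟨a, b⟩ hab
  rw [Finset.HasAntidiagonal.mem_antidiagonal] at hab
  rw [← coeff_psSubst_eq_eval₂ hP0 g (show a < n + 1 by omega),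
    ← coeff_psSubst_eq_eval₂ hP0 h (show b < n + 1 by omega)]

/-- `psSubst P` as a ring homomorphism. -/
noncomputable def psSubstHom {P : R⟦X⟧} (hP0 : constantCoeff (R := R) P = 0) : R⟦X⟧ →+* R⟦X⟧ :=
  { toFun := psSubst P
    map_one' := psSubst_one P
    map_mul' := psSubst_mul hP0
    map_zero' := by
      have := psSubst_C P 0; rwa [map_zero] at this
    map_add' := psSubst_add P }

theorem psSubstHom_apply {P : R⟦X⟧} (hP0 : constantCoeff (R := R) P = 0) (g : R⟦X⟧) :
    psSubstHom hP0 g = psSubst P g := rfl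

theorem psSubst_map {S : Type*} [CommRing S] (ψ : R →+* S) (P g : R⟦X⟧) :
    PowerSeries.map ψ (psSubst P g) = psSubst (PowerSeries.map ψ P) (PowerSeries.map ψ g) := by
  ext n
  rw [coeff_map, coeff_psSubst, coeff_psSubst, map_sum]
  apply Finset.sum_congr rfl
  intro k _
  rw [map_mul, ← map_pow]
  rfl


/-! ### Two-variable substitution -/

section Sub2
variable {R : Type*} [CommRing R]

local notation "A" => PowerSeries R
local notation "B" => PowerSeries (PowerSeries R)

/-- coefficient of `S^i T^j`. -/
noncomputable def coeff2 (i j : ℕ) (u : B) : R :=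
  coeff (R := R) i (coeff (R := A) j u)

/-- Substitution `T ↦ E` in `F⟦S⟧⟦T⟧`, valid when `coeff2 0 0 E = 0`. -/
noncomputable def sub2 (E u : B) : B :=
  PowerSeries.mk fun j => PowerSeries.mk fun i => ∑ k ∈ Finset.range (i + j + 1),
    coeff (R := R) i (coeff (R := A) k u * coeff (R := A) j (E ^ k))

theorem coeff2_add (i j : ℕ) (u v : B) : coeff2 i j (u + v) = coeff2 i j u + coeff2 i j v := by
  simp [coeff2]

theorem coeff2_sub (i j : ℕ) (u v : B) : coeff2 i j (u - v) = coeff2 i j u - coeff2 i j v := by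
  simp [coeff2]

theorem coeff2_mul (i j : ℕ) (u v : B) :
    coeff2 i j (u * v) = ∑ q ∈ Finset.HasAntidiagonal.antidiagonal j, ∑ p ∈ Finset.HasAntidiagonal.antidiagonal i,
      coeff2 p.1 q.1 u * coeff2 p.2 q.2 v := by
  rw [coeff2, coeff_mul, map_sum]
  apply Finset.sum_congr rfl
  rintro ⟨j1, j2⟩ _
  rw [coeff_mul]
  rfl

theorem coeff2_C (i j : ℕ) (a : A) :
    coeff2 i j (C (R := A) a) = if j = 0 then coeff (R := R) i a else 0 := by
  rw [coeff2, coeff_C]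
  split <;> simp

theorem coeff2_pow_eq_zero {E : B} (hE : coeff2 0 0 E = 0) :
    ∀ {k i j : ℕ}, i + j < k → coeff2 i j (E ^ k) = 0 := by
  intro k
  induction k with
  | zero => intro i j h; omega
  | succ k ih =>
    intro i j h
    rw [pow_succ, mul_comm, coeff2_mul]
    apply Finset.sum_eq_zero
    rintro ⟨j1, j2⟩ hj
    apply Finset.sum_eq_zero
    rintro ⟨i1, i2⟩ hi
    rw [Finset.HasAntidiagonal.mem_antidiagonal] at hj hi
    by_cases h0 : i1 = 0 ∧ j1 = 0
    · rw [h0.1, h0.2, hE, zero_mul]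
    · have : i2 + j2 < k := by omega
      rw [ih this, mul_zero]

theorem coeff2_sub2 (E u : B) (i j : ℕ) :
    coeff2 i j (sub2 E u) = ∑ k ∈ Finset.range (i + j + 1),
      coeff (R := R) i (coeff (R := A) k u * coeff (R := A) j (E ^ k)) := by
  rw [coeff2, sub2, coeff_mk, coeff_mk]

theorem coeff_term_eq_zero {E : B} (hE : coeff2 0 0 E = 0) (a : A) {i j k : ℕ}
    (h : i + j < k) : coeff (R := R) i (a * coeff (R := A) j (E ^ k)) = 0 := by
  rw [coeff_mul]
  apply Finset.sum_eq_zero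
  rintro ⟨i1, i2⟩ hi
  rw [Finset.HasAntidiagonal.mem_antidiagonal] at hi
  have : coeff (R := R) i2 (coeff (R := A) j (E ^ k)) = 0 := coeff2_pow_eq_zero hE (by omega)
  rw [this, mul_zero]

theorem coeff2_sub2_ext {E : B} (hE : coeff2 0 0 E = 0) (u : B) {i j N : ℕ}
    (hN : i + j < N) :
    coeff2 i j (sub2 E u) = ∑ k ∈ Finset.range N,
      coeff (R := R) i (coeff (R := A) k u * coeff (R := A) j (E ^ k)) := by
  rw [coeff2_sub2]
  apply Finset.sum_subset
  · intro x hx; simp only [Finset.mem_range] at hx ⊢; omega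
  · intro x _ hx
    simp only [Finset.mem_range, not_lt] at hx
    exact coeff_term_eq_zero hE _ (by omega)

theorem eval₂_trunc_eq_sum {S T : Type*} [CommRing S] [CommRing T] (f : S →+* T)
    (x : T) (u : PowerSeries S) (N : ℕ) :
    Polynomial.eval₂ f x (trunc N u) =
      ∑ k ∈ Finset.range N, f (coeff (R := S) k u) * x ^ k := by
  have hdeg : (trunc N u).natDegree < N + 1 := by
    rcases eq_or_ne (trunc N u) 0 with h | h
    · rw [h, Polynomial.natDegree_zero]; omega
    · refine (Polynomial.natDegree_lt_iff_degree_lt h).mpr ?_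
      exact lt_of_lt_of_le (degree_trunc_lt u N) (by exact_mod_cast Nat.le_succ N)
  rw [Polynomial.eval₂_eq_sum_range' f hdeg x, Finset.sum_range_succ, coeff_trunc,
    if_neg (lt_irrefl N), map_zero, zero_mul, add_zero]
  apply Finset.sum_congr rfl
  intro k hk
  simp only [Finset.mem_range] at hk
  rw [coeff_trunc, if_pos hk]

theorem coeff2_eval₂ {E : B} (hE : coeff2 0 0 E = 0) (q : Polynomial A) (i j : ℕ) :
    coeff2 i j (Polynomial.eval₂ (C (R := A)) E q) =
      ∑ k ∈ Finset.range (i + j + 1), coeff (R := R) i (q.coeff k * coeff (R := A) j (E ^ k)) := by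
  have hq : q.natDegree < q.natDegree + i + j + 2 := by omega
  rw [coeff2, Polynomial.eval₂_eq_sum_range' (C (R := A)) hq E, map_sum, map_sum]
  have : ∀ k, coeff (R := R) i (coeff (R := A) j (C (R := A) (q.coeff k) * E ^ k)) =
      coeff (R := R) i (q.coeff k * coeff (R := A) j (E ^ k)) := by
    intro k; rw [coeff_C_mul]
  simp only [this]
  symm
  apply Finset.sum_subset
  · intro x hx; simp only [Finset.mem_range] at hx ⊢; omega
  · intro x _ hx
    simp only [Finset.mem_range, not_lt] at hx
    exact coeff_term_eq_zero hE _ (by omega)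

theorem coeff2_sub2_eq_eval₂ {E : B} (hE : coeff2 0 0 E = 0) (u : B) {i j N : ℕ}
    (hN : i + j < N) :
    coeff2 i j (sub2 E u) = coeff2 i j (Polynomial.eval₂ (C (R := A)) E (trunc N u)) := by
  rw [coeff2_eval₂ hE, coeff2_sub2]
  apply Finset.sum_congr rfl
  intro k hk
  simp only [Finset.mem_range] at hk
  rw [coeff_trunc, if_pos (by omega)]

theorem B_ext {u v : B} (h : ∀ i j, coeff2 i j u = coeff2 i j v) : u = v := by
  apply PowerSeries.ext
  intro j
  apply PowerSeries.ext
  intro i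
  exact h i j

theorem sub2_add (E u v : B) : sub2 E (u + v) = sub2 E u + sub2 E v := by
  apply B_ext
  intro i j
  rw [coeff2_add, coeff2_sub2, coeff2_sub2, coeff2_sub2, ← Finset.sum_add_distrib]
  apply Finset.sum_congr rfl
  intro k _
  rw [map_add, add_mul, map_add]

theorem sub2_sub (E u v : B) : sub2 E (u - v) = sub2 E u - sub2 E v := by
  apply B_ext
  intro i j
  rw [coeff2_sub, coeff2_sub2, coeff2_sub2, coeff2_sub2, ← Finset.sum_sub_distrib]
  apply Finset.sum_congr rfl
  intro k _
  rw [map_sub, sub_mul, map_sub]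

theorem sub2_C (E : B) (a : A) : sub2 E (C (R := A) a) = C (R := A) a := by
  apply B_ext
  intro i j
  rw [coeff2_sub2, coeff2_C, Finset.sum_eq_single 0]
  · rw [pow_zero, coeff_zero_C, coeff_one]
    split_ifs with h
    · rw [mul_one]
    · rw [mul_zero, map_zero]
  · intro k _ hk
    rw [coeff_C, if_neg hk, zero_mul, map_zero]
  · intro h; simp at h

theorem sub2_one (E : B) : sub2 E 1 = 1 := by
  have := sub2_C E 1
  rwa [map_one] at this

theorem sub2_zero (E : B) : sub2 E 0 = 0 := by
  have := sub2_C E 0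
  rwa [map_zero] at this

theorem sub2_X {E : B} (hE : coeff2 0 0 E = 0) : sub2 E X = E := by
  apply B_ext
  intro i j
  rw [coeff2_sub2, Finset.sum_eq_single 1]
  · rw [coeff_X, if_pos rfl, pow_one, one_mul]
    rfl
  · intro k _ hk
    rw [coeff_X, if_neg hk, zero_mul, map_zero]
  · intro h
    simp only [Finset.mem_range, not_lt] at h
    have hij : i = 0 ∧ j = 0 := by omega
    rw [coeff_X, if_pos rfl, pow_one, one_mul, hij.1, hij.2]
    exact hE

theorem coeff2_zero_zero_sub2 (E u : B) : coeff2 0 0 (sub2 E u) = coeff2 0 0 u := by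
  rw [coeff2_sub2]
  simp [coeff2]

theorem sub2_congr (E : B) {hE : coeff2 0 0 E = 0} {u v : B} {i j : ℕ}
    (huv : ∀ i' j', i' + j' ≤ i + j → coeff2 i' j' u = coeff2 i' j' v) :
    coeff2 i j (sub2 E u) = coeff2 i j (sub2 E v) := by
  rw [coeff2_sub2, coeff2_sub2]
  apply Finset.sum_congr rfl
  intro k hk
  simp only [Finset.mem_range] at hk
  rw [coeff_mul, coeff_mul]
  apply Finset.sum_congr rfl
  rintro ⟨i1, i2⟩ hi
  rw [Finset.HasAntidiagonal.mem_antidiagonal] at hi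
  by_cases hc : k ≤ i2 + j
  · have : coeff (R := R) i1 (coeff (R := A) k u) = coeff (R := R) i1 (coeff (R := A) k v) := huv i1 k (by omega)
    rw [this]
  · have : coeff (R := R) i2 (coeff (R := A) j (E ^ k)) = 0 := coeff2_pow_eq_zero hE (by omega)
    rw [this, mul_zero, mul_zero]

theorem sub2_mul {E : B} (hE : coeff2 0 0 E = 0) (u v : B) :
    sub2 E (u * v) = sub2 E u * sub2 E v := by
  apply B_ext
  intro i j
  set n := i + j with hn
  rw [coeff2_sub2_eq_eval₂ hE _ (show i + j < 2 * n + 2 by omega)]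
  have key : coeff2 i j (Polynomial.eval₂ (C (R := A)) E (trunc (2 * n + 2) (u * v))) =
      coeff2 i j (Polynomial.eval₂ (C (R := A)) E (trunc (n + 1) u * trunc (n + 1) v)) := by
    rw [coeff2_eval₂ hE, coeff2_eval₂ hE]
    apply Finset.sum_congr rfl
    intro k hk
    simp only [Finset.mem_range] at hk
    congr 2
    rw [coeff_trunc, if_pos (by omega), Polynomial.coeff_mul, coeff_mul]
    apply Finset.sum_congr rfl
    rintro ⟨a, b⟩ hab
    rw [Finset.HasAntidiagonal.mem_antidiagonal] at hab
    rw [coeff_trunc, coeff_trunc, if_pos (by omega), if_pos (by omega)]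
  rw [key, Polynomial.eval₂_mul, coeff2_mul, coeff2_mul]
  apply Finset.sum_congr rfl
  rintro ⟨j1, j2⟩ hj
  rw [Finset.HasAntidiagonal.mem_antidiagonal] at hj
  apply Finset.sum_congr rfl
  rintro ⟨i1, i2⟩ hi
  rw [Finset.HasAntidiagonal.mem_antidiagonal] at hi
  rw [← coeff2_sub2_eq_eval₂ hE u (show i1 + j1 < n + 1 by omega),
    ← coeff2_sub2_eq_eval₂ hE v (show i2 + j2 < n + 1 by omega)]

/-- `sub2 E` as a ring homomorphism. -/
noncomputable def sub2Hom {E : B} (hE : coeff2 0 0 E = 0) : B →+* B :=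
  { toFun := sub2 E
    map_one' := sub2_one E
    map_mul' := sub2_mul hE
    map_zero' := sub2_zero E
    map_add' := sub2_add E }

theorem sub2Hom_apply {E : B} (hE : coeff2 0 0 E = 0) (u : B) : sub2Hom hE u = sub2 E u := rfl

theorem sub2_assoc {E E' : B} (hE : coeff2 0 0 E = 0) (hE' : coeff2 0 0 E' = 0) (u : B) :
    sub2 E (sub2 E' u) = sub2 (sub2 E E') u := by
  apply B_ext
  intro i j
  set N := i + j + 1 with hN
  have hEE' : coeff2 0 0 (sub2 E E') = 0 := by rw [coeff2_zero_zero_sub2]; exact hE'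
  have lhs : coeff2 i j (sub2 E (sub2 E' u)) =
      coeff2 i j (sub2 E (∑ k ∈ Finset.range N, C (R := A) (coeff (R := A) k u) * E' ^ k)) := by
    apply sub2_congr E (hE := hE)
    intro i' j' h
    rw [coeff2_sub2_eq_eval₂ hE' u (show i' + j' < N by omega), eval₂_trunc_eq_sum]
  rw [lhs]
  have expand : sub2 E (∑ k ∈ Finset.range N, C (R := A) (coeff (R := A) k u) * E' ^ k) =
      ∑ k ∈ Finset.range N, C (R := A) (coeff (R := A) k u) * (sub2 E E') ^ k := by
    rw [show sub2 E (∑ k ∈ Finset.range N, C (R := A) (coeff (R := A) k u) * E' ^ k) =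
        sub2Hom hE (∑ k ∈ Finset.range N, C (R := A) (coeff (R := A) k u) * E' ^ k) from rfl, map_sum]
    apply Finset.sum_congr rfl
    intro k _
    rw [map_mul, map_pow, sub2Hom_apply, sub2Hom_apply, sub2_C]
  rw [expand, coeff2_sub2_eq_eval₂ hEE' u (show i + j < N by omega), eval₂_trunc_eq_sum]

theorem sub2_eq_psSubst {E : B} (hE0 : coeff (R := A) 0 E = 0) (u : B) :
    sub2 E u = psSubst E u := by
  apply B_ext
  intro i j
  rw [coeff2_sub2, coeff2, coeff_psSubst, map_sum]
  symm
  apply Finset.sum_subset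
  · intro x hx; simp only [Finset.mem_range] at hx ⊢; omega
  · intro k _ hk
    simp only [Finset.mem_range, not_lt] at hk
    have : constantCoeff (R := A) E = 0 := by rwa [← coeff_zero_eq_constantCoeff]
    rw [coeff_pow_eq_zero this (by omega), mul_zero, map_zero]

/-- the inclusion `R⟦T⟧ → R⟦S⟧⟦T⟧`. -/
noncomputable def iota : PowerSeries R →+* B := PowerSeries.map (C (R := R))

theorem coeff2_iota (i j : ℕ) (g : PowerSeries R) :
    coeff2 i j (iota g) = if i = 0 then coeff (R := R) j g else 0 := by
  rw [coeff2, iota, coeff_map, coeff_C]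

theorem iota_injective : Function.Injective (iota (R := R)) := by
  intro u v h
  ext n
  have := congrArg (fun w => coeff2 0 n w) h
  simpa [coeff2_iota] using this

theorem iota_psSubst {P : PowerSeries R} (hP0 : constantCoeff (R := R) P = 0) (g : PowerSeries R) :
    iota (psSubst P g) = sub2 (iota P) (iota g) := by
  have h0 : coeff (R := A) 0 (iota P) = 0 := by
    rw [iota, coeff_map, ← coeff_zero_eq_constantCoeff] at *
    rw [hP0, map_zero]
  rw [sub2_eq_psSubst h0, iota]
  exact psSubst_map (C (R := R)) P g

theorem coeff2_00_iota {P : PowerSeries R} (hP0 : constantCoeff (R := R) P = 0) :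
    coeff2 0 0 (iota P) = 0 := by
  rw [coeff2_iota, if_pos rfl, coeff_zero_eq_constantCoeff, hP0]

theorem psSubst_assoc {P Q : PowerSeries R} (hP0 : constantCoeff (R := R) P = 0)
    (hQ0 : constantCoeff (R := R) Q = 0) (g : PowerSeries R) :
    psSubst P (psSubst Q g) = psSubst (psSubst P Q) g := by
  apply iota_injective
  have hPQ0 : constantCoeff (R := R) (psSubst P Q) = 0 := by
    rw [← coeff_zero_eq_constantCoeff, constantCoeff_psSubst, coeff_zero_eq_constantCoeff, hQ0]
  rw [iota_psSubst hPQ0, iota_psSubst hP0, iota_psSubst hQ0,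
    sub2_assoc (coeff2_00_iota hP0) (coeff2_00_iota hQ0), ← iota_psSubst hP0]

/-- `map` by `psSubstHom` commutes with `sub2`. -/
theorem map_psSubstHom_sub2 {P' : PowerSeries R} (hP'0 : constantCoeff (R := R) P' = 0)
    {E : B} (hE : coeff2 0 0 E = 0) (u : B) :
    PowerSeries.map (psSubstHom hP'0) (sub2 E u) =
      sub2 (PowerSeries.map (psSubstHom hP'0) E) (PowerSeries.map (psSubstHom hP'0) u) := by
  apply B_ext
  intro i j
  set σ := psSubstHom hP'0 with hσ
  set N := i + j + 1 with hN
  set w : A := ∑ k ∈ Finset.range N, coeff (R := A) k u * coeff (R := A) j (E ^ k) with hw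
  have hlocal : coeff (R := R) i (σ (coeff (R := A) j (sub2 E u))) = coeff (R := R) i (σ w) := by
    rw [psSubstHom_apply, psSubstHom_apply]
    apply coeff_psSubst_congr
    intro i' hi'
    have := coeff2_sub2_ext hE u (show i' + j < N by omega)
    rw [coeff2] at this
    rw [this, hw, map_sum]
  rw [coeff2, coeff_map, hlocal, hw, map_sum, map_sum]
  rw [coeff2_sub2]
  apply Finset.sum_congr rfl
  intro k _
  rw [map_mul, coeff_map, ← map_pow, coeff_map]

/-! ### The series `E₀ = S + T` -/

theorem coeff2_00_E0 : coeff2 0 0 (C (R := A) (X : A) + (X : B)) = 0 := by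
  simp [coeff2_add, coeff2_C, coeff2, coeff_X]

theorem coeff2_E0_pow (k i j : ℕ) :
    coeff2 i j ((C (R := A) (X : A) + (X : B)) ^ k) = if i + j = k then ((k.choose i : ℕ) : R) else 0 := by
  rw [add_pow, coeff2, map_sum, map_sum]
  have hterm : ∀ m ∈ Finset.range (k + 1),
      coeff (R := R) i (coeff (R := A) j ((C (R := A) (X : A)) ^ m * (X : B) ^ (k - m) * ((k.choose m : ℕ) : B)))
        = if j = k - m ∧ i = m then ((k.choose m : ℕ) : R) else 0 := by
    intro m _
    have h1 : (C (R := A) (X : A)) ^ m * (X : B) ^ (k - m) * ((k.choose m : ℕ) : B)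
        = C (R := A) ((X : A) ^ m * ((k.choose m : ℕ) : A)) * (X : B) ^ (k - m) := by
      rw [map_mul, ← map_pow, map_natCast (C (R := A))]
      ring
    rw [h1, coeff_C_mul, coeff_X_pow]
    by_cases hj : j = k - m
    · rw [if_pos hj, mul_one]
      have h2 : (X : A) ^ m * ((k.choose m : ℕ) : A)
          = C (R := R) ((k.choose m : ℕ) : R) * (X : A) ^ m := by
        rw [← map_natCast (C (R := R))]
        ring
      rw [h2, coeff_C_mul, coeff_X_pow]
      by_cases hi : i = m
      · rw [if_pos hi, mul_one, if_pos ⟨hj, hi⟩]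
      · rw [if_neg hi, mul_zero, if_neg (by tauto)]
    · rw [if_neg hj, mul_zero, map_zero, if_neg (by tauto)]
  rw [Finset.sum_congr rfl hterm]
  by_cases hk : i + j = k
  · rw [if_pos hk, Finset.sum_eq_single i]
    · rw [if_pos ⟨by omega, rfl⟩]
    · intro m _ hm
      rw [if_neg (by omega)]
    · intro h
      simp only [Finset.mem_range, not_lt] at h
      omega
  · rw [if_neg hk, Finset.sum_eq_zero]
    intro m hm
    simp only [Finset.mem_range] at hm
    rw [if_neg (by omega)]

theorem coeff2_sub2_E0_iota (h : PowerSeries R) (i j : ℕ) :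
    coeff2 i j (sub2 (C (R := A) (X : A) + (X : B)) (iota h)) =
      (((i + j).choose i : ℕ) : R) * coeff (R := R) (i + j) h := by
  rw [coeff2_sub2]
  have hterm : ∀ k ∈ Finset.range (i + j + 1),
      coeff (R := R) i (coeff (R := A) k (iota h) * coeff (R := A) j ((C (R := A) (X : A) + (X : B)) ^ k))
        = if i + j = k then (((i + j).choose i : ℕ) : R) * coeff (R := R) k h else 0 := by
    intro k _
    rw [iota, coeff_map, coeff_C_mul]
    have := coeff2_E0_pow (R := R) k i j
    rw [coeff2] at this
    rw [this]
    by_cases hk : i + j = k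
    · rw [if_pos hk, if_pos hk, mul_comm, hk]
    · rw [if_neg hk, if_neg hk, mul_zero]
  rw [Finset.sum_congr rfl hterm, Finset.sum_eq_single (i + j)]
  · rw [if_pos rfl]
  · intro m _ hm
    rw [if_neg (fun h => hm h.symm)]
  · intro h'
    simp only [Finset.mem_range, not_lt] at h'
    omega

end Sub2

section FieldLemmas
open PowerSeries
variable {F : Type*} [Field F]

theorem coeff_pow_self' {R : Type*} [CommRing R] {Q : R⟦X⟧} (hQ0 : constantCoeff (R := R) Q = 0)
    (n : ℕ) : coeff (R := R) n (Q ^ n) = (coeff (R := R) 1 Q) ^ n := by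
  induction n with
  | zero => simp
  | succ n ih =>
    rw [pow_succ, coeff_mul, Finset.sum_eq_single (n, 1)]
    · rw [ih, pow_succ]
    · rintro ⟨a, b⟩ hab hne
      rw [Finset.HasAntidiagonal.mem_antidiagonal] at hab
      rcases Nat.lt_or_ge a n with h | h
      · rw [coeff_pow_eq_zero hQ0 h, zero_mul]
      · rcases Nat.eq_or_lt_of_le h with h' | h'
        · exfalso; apply hne; rw [← h']; congr 1; omega
        · have hb : b = 0 := by omega
          rw [hb, coeff_zero_eq_constantCoeff, hQ0, mul_zero]
    · intro h
      exfalso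
      apply h
      rw [Finset.HasAntidiagonal.mem_antidiagonal]
  
theorem psSubst_injective {Q : PowerSeries F} (hQ0 : constantCoeff (R := F) Q = 0)
    (hQ1 : coeff (R := F) 1 Q ≠ 0) : Function.Injective (psSubst Q) := by
  intro u v h
  ext n
  induction n using Nat.strong_induction_on with
  | _ n ih =>
    have hc := congrArg (coeff (R := F) n) h
    rw [coeff_psSubst, coeff_psSubst, Finset.sum_range_succ, Finset.sum_range_succ] at hc
    have hsum : ∑ k ∈ Finset.range n, coeff (R := F) k u * coeff (R := F) n (Q ^ k)
        = ∑ k ∈ Finset.range n, coeff (R := F) k v * coeff (R := F) n (Q ^ k) := by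
      apply Finset.sum_congr rfl
      intro k hk
      simp only [Finset.mem_range] at hk
      rw [ih k hk]
    rw [hsum] at hc
    have h2 : coeff (R := F) n u * coeff (R := F) n (Q ^ n) = coeff (R := F) n v * coeff (R := F) n (Q ^ n) := by
      exact add_left_cancel hc
    rw [coeff_pow_self' hQ0] at h2
    exact mul_right_cancel₀ (pow_ne_zero n hQ1) h2

end FieldLemmas

end psAux


open PowerSeries psAux in
/-- Proposition 3.7: if `θ⁽¹⁾(t) ≠ 0`, `Q := θ(t) - C t`, and `P` is the compositional
inverse of `Q` (so `P(Q) = T`), then `θ̃ := subst P ∘ θ` is an iterative derivation with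
`θ̃(t) = t + T`. -/
theorem normalized_equivalent_derivation
    {F : Type*} [Field F] (p : ℕ) (hp : 0 < p) [CharP F p]
    (θ : F → PowerSeries F) (hθ : IsIterativeDerivation θ)
    (hθ1 : ∃ f : F, PowerSeries.coeff 1 (θ f) ≠ 0)
    (t : F) (ht : PowerSeries.coeff 1 (θ t) ≠ 0)
    (Q : PowerSeries F) (hQ : Q = θ t - PowerSeries.C t)
    (P : PowerSeries F) (hP0 : PowerSeries.constantCoeff P = 0)
    (hPQ : psSubst Q P = PowerSeries.X) :
    IsIterativeDerivation (fun f => psSubst P (θ f)) ∧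
      psSubst P (θ t) = PowerSeries.C t + PowerSeries.X := by
  classical
  obtain ⟨h1, hadd, hmul, h0, hiter⟩ := hθ
  let θR : F →+* PowerSeries F := RingHom.mk' { toFun := θ, map_one' := h1, map_mul' := hmul } hadd
  have hP0' : coeff (R := F) 0 P = 0 := by rwa [coeff_zero_eq_constantCoeff]
  have hQ0 : constantCoeff (R := F) Q = 0 := by
    rw [← coeff_zero_eq_constantCoeff, hQ, map_sub, h0, coeff_zero_C, sub_self]
  have hQ1 : coeff (R := F) 1 Q ≠ 0 := by
    rw [hQ, map_sub, coeff_C, if_neg one_ne_zero, sub_zero]; exact ht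
  -- Q(P) = X
  have hQP : psSubst P Q = X := by
    apply psSubst_injective hQ0 hQ1
    rw [psSubst_assoc hQ0 hP0 Q, hPQ, psSubst_X_left, psSubst_X hQ0]
  -- part 2
  have hθt : θ t = Q + PowerSeries.C (R := F) t := by rw [hQ]; ring
  have part2 : psSubst P (θ t) = PowerSeries.C (R := F) t + X := by
    rw [hθt, psSubst_add, psSubst_C, hQP, add_comm]
  -- the substitution homomorphism σ on F⟦S⟧
  let σR : PowerSeries F →+* PowerSeries F := psSubstHom hP0
  -- `E0 = S + T`
  have hE0 : coeff2 0 0 (PowerSeries.C (R := PowerSeries F) X + (X : PowerSeries (PowerSeries F))) = 0 :=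
    coeff2_00_E0
  have hΘP0 : coeff2 0 0 (PowerSeries.map θR P) = 0 := by
    simp [coeff2, PowerSeries.coeff_map, hP0']
  have hΘQ0 : coeff2 0 0 (PowerSeries.map θR Q) = 0 := by
    have : coeff (R := F) 0 Q = 0 := by rwa [coeff_zero_eq_constantCoeff]
    simp [coeff2, PowerSeries.coeff_map, this]
  have hmapθ : ∀ (W g : PowerSeries F), constantCoeff (R := F) W = 0 →
      PowerSeries.map θR (psSubst W g) = sub2 (PowerSeries.map θR W) (PowerSeries.map θR g) := by
    intro W g hW
    rw [psSubst_map θR W g, ← sub2_eq_psSubst]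
    have : coeff (R := F) 0 W = 0 := by rwa [coeff_zero_eq_constantCoeff]
    simp [PowerSeries.coeff_map, this]
  -- iterativity of θ in series form
  have hΘθ : ∀ f, PowerSeries.map θR (θ f) = sub2 (PowerSeries.C (R := PowerSeries F) X + X)
      (iota (θ f)) := by
    intro f
    apply B_ext
    intro i j
    rw [coeff2_sub2_E0_iota, coeff2, PowerSeries.coeff_map]
    show coeff (R := F) i (θ (coeff (R := F) j (θ f))) = _
    rw [hiter i j f, nsmul_eq_mul]
  -- σ fixes "pure S" constants and iota-images
  have hσiota : ∀ g : PowerSeries F, PowerSeries.map σR (iota g) = iota g := by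
    intro g
    apply PowerSeries.ext
    intro n
    rw [PowerSeries.coeff_map, iota, PowerSeries.coeff_map]
    exact psSubst_C P _
  have hσX : σR X = P := psSubst_X hP0
  have hW0 : coeff2 0 0 (PowerSeries.map σR (PowerSeries.map θR P)) = 0 := by
    simp [coeff2, PowerSeries.coeff_map, hP0']
  -- the key identity (★): P(S) + ΘP(P(S),T) = P(S+T)
  have hb2 : sub2 (PowerSeries.map θR P) (PowerSeries.map θR Q) = X := by
    have h := congrArg (PowerSeries.map θR) hQP
    rw [PowerSeries.map_X, hmapθ P Q hP0] at h
    exact h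
  have hb2σ : sub2 (PowerSeries.map σR (PowerSeries.map θR P))
      (PowerSeries.map σR (PowerSeries.map θR Q)) = X := by
    have h := congrArg (PowerSeries.map σR) hb2
    rw [PowerSeries.map_X, map_psSubstHom_sub2 hP0 hΘP0] at h
    exact h
  have hc : PowerSeries.map θR Q = sub2 (PowerSeries.C (R := PowerSeries F) X + X) (iota Q)
      - PowerSeries.C (R := PowerSeries F) Q := by
    have e1 : PowerSeries.map θR Q = PowerSeries.map θR (θ t)
        - PowerSeries.C (R := PowerSeries F) (θ t) := by
      rw [hQ, map_sub, PowerSeries.map_C]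
      rfl
    rw [e1, hΘθ t]
    have e2 : iota (θ t) = iota Q + PowerSeries.C (R := PowerSeries F) (PowerSeries.C (R := F) t) := by
      rw [hθt, map_add, iota, PowerSeries.map_C]
    rw [e2, sub2_add, sub2_C]
    have e3 : PowerSeries.C (R := PowerSeries F) (θ t) =
        PowerSeries.C (R := PowerSeries F) Q + PowerSeries.C (R := PowerSeries F) (PowerSeries.C (R := F) t) := by
      rw [hθt, map_add]
    rw [e3]
    ring
  have hCAPX0 : coeff2 0 0 (PowerSeries.C (R := PowerSeries F) P + (X : PowerSeries (PowerSeries F))) = 0 := by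
    simp [coeff2_add, coeff2_C, coeff2, PowerSeries.coeff_X, hP0']
  have hM : PowerSeries.map σR (PowerSeries.map θR Q) =
      sub2 (PowerSeries.C (R := PowerSeries F) P + X) (iota Q) - PowerSeries.C (R := PowerSeries F) X := by
    rw [hc, map_sub, PowerSeries.map_C]
    have e4 : σR Q = X := hQP
    rw [e4, map_psSubstHom_sub2 hP0 hE0, hσiota Q]
    have e5 : PowerSeries.map σR (PowerSeries.C (R := PowerSeries F) X + X) =
        PowerSeries.C (R := PowerSeries F) P + X := by
      rw [map_add, PowerSeries.map_X, PowerSeries.map_C, hσX]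
    rw [e5]
  have hCPW0 : coeff2 0 0 (PowerSeries.C (R := PowerSeries F) P
      + PowerSeries.map σR (PowerSeries.map θR P)) = 0 := by
    rw [coeff2_add, hW0, coeff2_C, if_pos rfl, hP0', add_zero]
  have hιQ0 : coeff2 0 0 (iota Q) = 0 := coeff2_00_iota hQ0
  have hιP0 : coeff2 0 0 (iota P) = 0 := coeff2_00_iota hP0
  have hi' : sub2 (PowerSeries.C (R := PowerSeries F) P + PowerSeries.map σR (PowerSeries.map θR P))
      (iota Q) = PowerSeries.C (R := PowerSeries F) X + X := by
    have e1 : sub2 (PowerSeries.map σR (PowerSeries.map θR P))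
        (sub2 (PowerSeries.C (R := PowerSeries F) P + X) (iota Q) - PowerSeries.C (R := PowerSeries F) X)
        = X := by
      rw [← hM]; exact hb2σ
    rw [sub2_sub, sub2_C, sub2_assoc hW0 hCAPX0] at e1
    have e2 : sub2 (PowerSeries.map σR (PowerSeries.map θR P))
        (PowerSeries.C (R := PowerSeries F) P + X)
        = PowerSeries.C (R := PowerSeries F) P + PowerSeries.map σR (PowerSeries.map θR P) := by
      rw [sub2_add, sub2_C, sub2_X hW0]
    rw [e2] at e1
    have e3 := eq_add_of_sub_eq e1
    rw [e3, add_comm]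
  have hstar : PowerSeries.C (R := PowerSeries F) P + PowerSeries.map σR (PowerSeries.map θR P)
      = sub2 (PowerSeries.C (R := PowerSeries F) X + X) (iota P) := by
    rw [← hi', ← sub2_assoc hCPW0 hιQ0, ← iota_psSubst hQ0, hPQ]
    have hιX : iota (X : PowerSeries F) = (X : PowerSeries (PowerSeries F)) := by
      unfold iota; exact PowerSeries.map_X (PowerSeries.C (R := F))
    rw [hιX, sub2_X hCPW0]
  -- the main identity
  have main : ∀ f, PowerSeries.map σR (PowerSeries.map θR (psSubst P (θ f)))
      = sub2 (PowerSeries.C (R := PowerSeries F) X + X) (iota (psSubst P (θ f))) := by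
    intro f
    rw [hmapθ P (θ f) hP0, hΘθ f, sub2_assoc hΘP0 hE0]
    have h4 : sub2 (PowerSeries.map θR P) (PowerSeries.C (R := PowerSeries F) X + X)
        = PowerSeries.C (R := PowerSeries F) X + PowerSeries.map θR P := by
      rw [sub2_add, sub2_C, sub2_X hΘP0]
    have hCXΘP0 : coeff2 0 0 (PowerSeries.C (R := PowerSeries F) X + PowerSeries.map θR P) = 0 := by
      rw [coeff2_add, hΘP0, coeff2_C, if_pos rfl, add_zero, PowerSeries.coeff_X,
        if_neg (by omega)]
    rw [h4, map_psSubstHom_sub2 hP0 hCXΘP0, hσiota]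
    have h7 : PowerSeries.map σR (PowerSeries.C (R := PowerSeries F) X + PowerSeries.map θR P)
        = PowerSeries.C (R := PowerSeries F) P + PowerSeries.map σR (PowerSeries.map θR P) := by
      rw [map_add, PowerSeries.map_C, hσX]
    rw [h7, hstar, ← sub2_assoc hE0 hιP0, ← iota_psSubst hP0]
  refine ⟨⟨?_, ?_, ?_, ?_, ?_⟩, part2⟩
  · show psSubst P (θ 1) = 1
    rw [h1, psSubst_one]
  · intro a b
    show psSubst P (θ (a + b)) = psSubst P (θ a) + psSubst P (θ b)
    rw [hadd, psSubst_add]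
  · intro a b
    show psSubst P (θ (a * b)) = psSubst P (θ a) * psSubst P (θ b)
    rw [hmul, psSubst_mul hP0]
  · intro r
    show coeff (R := F) 0 (psSubst P (θ r)) = r
    rw [constantCoeff_psSubst, h0]
  · intro i j r
    have hm := congrArg (coeff2 i j) (main r)
    rw [coeff2_sub2_E0_iota] at hm
    rw [coeff2, PowerSeries.coeff_map, PowerSeries.coeff_map] at hm
    show coeff (R := F) i (psSubst P (θ (coeff (R := F) j (psSubst P (θ r))))) = _
    rw [nsmul_eq_mul]
    exact hm
end

section
/- Let F be a field of characteristic p > 0, let d ∈ ℕ, and let g ∈ F⟦X⟧ be a power series whose constant coefficient is 0, whose coefficient of X^{p^d} is nonzero, and whose coefficient of X^n vanishes for every n not divisible by p^d. Let A, B ∈ MvPowerSeries (Fin 2) F (the formal power series ring F⟦U,T⟧ in two variables) both have constant coefficient 0. If PowerSeries.subst A g = PowerSeries.subst B g, then A = B. -/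
/-- Substitution `g ↦ g(A)` of a two-variable power series `A ∈ F⟦U,T⟧` (with zero
constant coefficient) into a one-variable power series `g ∈ F⟦X⟧`: the coefficient of
a monomial `e` in `A ^ k` vanishes for `k > e 0 + e 1` when the constant coefficient of
`A` is `0`, so the truncated sum below is the honest substitution `Σ_k (coeff k g) · A^k`. -/
noncomputable def mvSubst {F : Type*} [CommRing F] (A : MvPowerSeries (Fin 2) F)
    (g : PowerSeries F) : MvPowerSeries (Fin 2) F :=
  fun e => ∑ k ∈ Finset.range (e 0 + e 1 + 1),
    PowerSeries.coeff k g * MvPowerSeries.coeff e (A ^ k)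

section Aux

variable {F : Type*} [CommRing F]

/-- Powers of power series that agree on coefficients `≤ m` agree at `≤ m`. -/
lemma mv_agree_pow (φ ψ : MvPowerSeries (Fin 2) F) (m : Fin 2 →₀ ℕ)
    (h : ∀ u ≤ m, MvPowerSeries.coeff u φ = MvPowerSeries.coeff u ψ) :
    ∀ (k : ℕ) (u : Fin 2 →₀ ℕ), u ≤ m →
      MvPowerSeries.coeff u (φ ^ k) = MvPowerSeries.coeff u (ψ ^ k) := by
  intro k
  induction k with
  | zero => intro u _; simp
  | succ k ih =>
    intro u hu
    rw [pow_succ, pow_succ, MvPowerSeries.coeff_mul, MvPowerSeries.coeff_mul]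
    refine Finset.sum_congr rfl fun x hx => ?_
    rw [Finset.HasAntidiagonal.mem_antidiagonal] at hx
    have h1 : x.1 ≤ m := le_trans (hx ▸ le_self_add) hu
    have h2 : x.2 ≤ m := le_trans (hx ▸ le_add_self) hu
    rw [ih x.1 h1, h x.2 h2]

variable (p : ℕ) [hp : Fact p.Prime] [CharP F p]

lemma mvpoly_pow_char (P : MvPolynomial (Fin 2) F) :
    P ^ p = ∑ d ∈ P.support, MvPolynomial.monomial (p • d) (P.coeff d ^ p) := by
  haveI : CharP (MvPolynomial (Fin 2) F) p :=
    charP_of_injective_ringHom (MvPolynomial.C_injective (Fin 2) F) p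
  conv_lhs => rw [P.as_sum]
  rw [sum_pow_char]
  exact Finset.sum_congr rfl fun d _ => MvPolynomial.monomial_pow

lemma mvpoly_coeff_pow_char_smul (P : MvPolynomial (Fin 2) F) (e : Fin 2 →₀ ℕ) :
    (P ^ p).coeff (p • e) = P.coeff e ^ p := by
  have hinj : ∀ d₁ d₂ : Fin 2 →₀ ℕ, p • d₁ = p • d₂ → d₁ = d₂ := by
    intro d₁ d₂ hc
    ext i
    have := congrArg (fun f : Fin 2 →₀ ℕ => f i) hc
    simp only [Finsupp.smul_apply, smul_eq_mul] at this
    exact Nat.eq_of_mul_eq_mul_left hp.out.pos this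
  rw [mvpoly_pow_char, MvPolynomial.coeff_sum]
  by_cases he : e ∈ P.support
  · rw [Finset.sum_eq_single_of_mem e he]
    · rw [MvPolynomial.coeff_monomial, if_pos rfl]
    · intro d _ hd
      rw [MvPolynomial.coeff_monomial, if_neg (fun hc => hd (hinj _ _ hc))]
  · rw [Finset.sum_eq_zero, MvPolynomial.notMem_support_iff.mp he,
      zero_pow hp.out.ne_zero]
    intro d hd
    rw [MvPolynomial.coeff_monomial, if_neg (fun hc => he (hinj d e hc ▸ hd))]

lemma mvpoly_coeff_pow_char_vanish (P : MvPolynomial (Fin 2) F) (m : Fin 2 →₀ ℕ)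
    (i : Fin 2) (hi : ¬ p ∣ m i) : (P ^ p).coeff m = 0 := by
  rw [mvpoly_pow_char, MvPolynomial.coeff_sum]
  refine Finset.sum_eq_zero fun d _ => ?_
  rw [MvPolynomial.coeff_monomial, if_neg]
  intro hc
  exact hi ⟨d i, by rw [← hc, Finsupp.smul_apply, smul_eq_mul]⟩

lemma mv_coeff_pow_eq_trunc (A : MvPowerSeries (Fin 2) F) (m : Fin 2 →₀ ℕ) (k : ℕ) :
    MvPowerSeries.coeff m (A ^ k) =
      ((MvPowerSeries.trunc F (m + (Finsupp.single 0 1 + Finsupp.single 1 1)) A) ^ k).coeff m := by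
  set n : Fin 2 →₀ ℕ := m + (Finsupp.single 0 1 + Finsupp.single 1 1) with hn
  have key : ∀ u ≤ m, MvPowerSeries.coeff u A =
      MvPowerSeries.coeff u ((MvPowerSeries.trunc F n A : MvPolynomial (Fin 2) F) :
        MvPowerSeries (Fin 2) F) := by
    intro u hu
    rw [MvPolynomial.coeff_coe, MvPowerSeries.coeff_trunc, if_pos]
    refine lt_of_le_of_ne (le_trans hu (self_le_add_right m _)) ?_
    intro hc
    have h0 : u 0 ≤ m 0 := hu 0
    have h1 : u 0 = n 0 := congrArg (fun f : Fin 2 →₀ ℕ => f 0) hc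
    have h2 : n 0 = m 0 + 1 := by simp [hn]
    omega
  have := mv_agree_pow A ((MvPowerSeries.trunc F n A : MvPolynomial (Fin 2) F) :
    MvPowerSeries (Fin 2) F) m key k m le_rfl
  rw [this, ← MvPolynomial.coe_pow, MvPolynomial.coeff_coe]

end Aux

section Iter
variable {F : Type*} [CommRing F] (p : ℕ) [hp : Fact p.Prime] [CharP F p]

lemma mv_coeff_pow_char_smul (A : MvPowerSeries (Fin 2) F) (e : Fin 2 →₀ ℕ) :
    MvPowerSeries.coeff (p • e) (A ^ p) = MvPowerSeries.coeff e A ^ p := by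
  rw [mv_coeff_pow_eq_trunc, mvpoly_coeff_pow_char_smul, MvPowerSeries.coeff_trunc, if_pos]
  have hle : e ≤ p • e := by
    intro i
    rw [Finsupp.smul_apply, smul_eq_mul]
    exact Nat.le_mul_of_pos_left _ hp.out.pos
  refine lt_of_le_of_ne (le_trans hle (self_le_add_right _ _)) ?_
  intro hc
  have h1 := DFunLike.congr_fun hc (0 : Fin 2)
  have h2 : e 0 ≤ (p • e) 0 := hle 0
  have h4 : (Finsupp.single (0 : Fin 2) 1) 0 = 1 := Finsupp.single_eq_same
  have h5 : (Finsupp.single (1 : Fin 2) (1 : ℕ)) 0 = 0 := Finsupp.single_eq_of_ne (by decide)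
  rw [Finsupp.add_apply, Finsupp.add_apply, h4, h5] at h1
  omega

lemma mv_coeff_pow_char_vanish (A : MvPowerSeries (Fin 2) F) (m : Fin 2 →₀ ℕ)
    (i : Fin 2) (hi : ¬ p ∣ m i) : MvPowerSeries.coeff m (A ^ p) = 0 := by
  rw [mv_coeff_pow_eq_trunc, mvpoly_coeff_pow_char_vanish p _ m i hi]

lemma mv_coeff_pow_char_pow_smul (d : ℕ) (A : MvPowerSeries (Fin 2) F) (e : Fin 2 →₀ ℕ) :
    MvPowerSeries.coeff (p ^ d • e) (A ^ p ^ d) = MvPowerSeries.coeff e A ^ p ^ d := by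
  induction d with
  | zero => simp
  | succ d ih =>
    have h1 : A ^ p ^ (d + 1) = (A ^ p ^ d) ^ p := by rw [pow_succ, pow_mul]
    have h2 : p ^ (d + 1) • e = p • (p ^ d • e) := by rw [pow_succ', mul_smul]
    rw [h1, h2, mv_coeff_pow_char_smul, ih, ← pow_mul, ← pow_succ]

lemma mv_coeff_pow_char_pow_vanish (d : ℕ) (A : MvPowerSeries (Fin 2) F) (m : Fin 2 →₀ ℕ)
    (i : Fin 2) (hi : ¬ p ^ d ∣ m i) : MvPowerSeries.coeff m (A ^ p ^ d) = 0 := by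
  induction d generalizing m i with
  | zero => exact absurd (one_dvd (m i)) (pow_zero p ▸ hi)
  | succ d ih =>
    have h1 : A ^ p ^ (d + 1) = (A ^ p ^ d) ^ p := by rw [pow_succ, pow_mul]
    rw [h1]
    by_cases hall : ∀ j, p ∣ m j
    · set e : Fin 2 →₀ ℕ := m.mapRange (· / p) (Nat.zero_div _) with he
      have hme : m = p • e := by
        ext j
        rw [Finsupp.smul_apply, smul_eq_mul, he, Finsupp.mapRange_apply]
        exact (Nat.mul_div_cancel' (hall j)).symm
      have hei : ¬ p ^ d ∣ e i := by
        intro hc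
        apply hi
        have : m i = p * e i := by rw [hme, Finsupp.smul_apply, smul_eq_mul]
        rw [this, pow_succ']
        exact mul_dvd_mul_left p hc
      rw [hme, mv_coeff_pow_char_smul, ih e i hei, zero_pow hp.out.ne_zero]
    · push_neg at hall
      obtain ⟨j, hj⟩ := hall
      exact mv_coeff_pow_char_vanish p _ m j hj

end Iter

lemma fin2_deg_zero (u : Fin 2 →₀ ℕ) (h : u 0 + u 1 = 0) : u = 0 := by
  have h0 : u 0 = 0 := by omega
  have h1 : u 1 = 0 := by omega
  ext i
  fin_cases i
  · exact h0
  · exact h1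

lemma fin2_apply_le_deg (u : Fin 2 →₀ ℕ) (i : Fin 2) : u i ≤ u 0 + u 1 := by
  fin_cases i
  · exact Nat.le_add_right _ _
  · exact Nat.le_add_left _ _

/-- If `g ∈ F⟦X⟧` has zero constant coefficient, nonzero coefficient of `X^{p^d}`, and
vanishing coefficients in all degrees not divisible by `p^d`, then substitution of
two-variable power series (with zero constant coefficient) into `g` is injective. -/
theorem subst_injective_of_p_power_support
    {F : Type*} [Field F] (p : ℕ) (hp : 0 < p) [CharP F p] (d : ℕ)
    (g : PowerSeries F)
    (hg0 : PowerSeries.constantCoeff g = 0)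
    (hgd : PowerSeries.coeff (p ^ d) g ≠ 0)
    (hgvan : ∀ n : ℕ, ¬ (p ^ d ∣ n) → PowerSeries.coeff n g = 0)
    (A B : MvPowerSeries (Fin 2) F)
    (hA : MvPowerSeries.constantCoeff A = 0)
    (hB : MvPowerSeries.constantCoeff B = 0)
    (h : mvSubst A g = mvSubst B g) :
    A = B := by
  classical
  have hprime : p.Prime := (CharP.char_is_prime_or_zero F p).resolve_right (by omega)
  haveI : Fact p.Prime := ⟨hprime⟩
  set q := p ^ d with hqdef
  have hq0 : 0 < q := pow_pos hp d
  by_contra hne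
  have hex : ∃ e, MvPowerSeries.coeff e A ≠ MvPowerSeries.coeff e B := by
    by_contra hc; push_neg at hc; exact hne (MvPowerSeries.ext hc)
  obtain ⟨e1, he1⟩ := hex
  set C := A ^ q with hC
  set D := B ^ q with hD
  have hCc : MvPowerSeries.constantCoeff C = 0 := by
    rw [hC, map_pow, hA, zero_pow hq0.ne']
  have hDc : MvPowerSeries.constantCoeff D = 0 := by
    rw [hD, map_pow, hB, zero_pow hq0.ne']
  have hpowinj : ∀ a b : F, a ^ q = b ^ q → a = b := by
    intro a b hab
    by_contra hab'
    refine pow_ne_zero q (sub_ne_zero_of_ne hab') ?_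
    rw [hqdef, sub_pow_char_pow, ← hqdef, hab, sub_self]
  have hCDe : MvPowerSeries.coeff (q • e1) C ≠ MvPowerSeries.coeff (q • e1) D := by
    rw [hC, hD, hqdef, mv_coeff_pow_char_pow_smul, mv_coeff_pow_char_pow_smul]
    exact fun hc => he1 (hpowinj _ _ hc)
  have hPex : ∃ n, ∃ e : Fin 2 →₀ ℕ, e 0 + e 1 = n ∧
      MvPowerSeries.coeff e C ≠ MvPowerSeries.coeff e D := ⟨_, _, rfl, hCDe⟩
  obtain ⟨e₀, he₀deg, he₀⟩ := Nat.find_spec hPex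
  set n₀ := Nat.find hPex with hn₀
  have hmin : ∀ u : Fin 2 →₀ ℕ, u 0 + u 1 < n₀ →
      MvPowerSeries.coeff u C = MvPowerSeries.coeff u D := by
    intro u hu
    by_contra hcc
    exact Nat.find_min hPex hu ⟨u, rfl, hcc⟩
  have hall : ∀ j, q ∣ e₀ j := by
    by_contra hcc
    push_neg at hcc
    obtain ⟨i, hi⟩ := hcc
    apply he₀
    rw [hC, hD, hqdef, mv_coeff_pow_char_pow_vanish p d A e₀ i (hqdef ▸ hi),
      mv_coeff_pow_char_pow_vanish p d B e₀ i (hqdef ▸ hi)]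
  have he₀ne : e₀ ≠ 0 := by
    rintro rfl
    apply he₀
    rw [MvPowerSeries.coeff_zero_eq_constantCoeff_apply,
      MvPowerSeries.coeff_zero_eq_constantCoeff_apply, hCc, hDc]
  have hqn : q ≤ n₀ := by
    have hex2 : ∃ i, e₀ i ≠ 0 := by
      by_contra hcc; push_neg at hcc; exact he₀ne (Finsupp.ext hcc)
    obtain ⟨i, hi⟩ := hex2
    have h1 : q ≤ e₀ i := Nat.le_of_dvd (Nat.pos_of_ne_zero hi) (hall i)
    have h2 : e₀ i ≤ e₀ 0 + e₀ 1 := fin2_apply_le_deg e₀ i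
    omega
  have hsub := congrFun h e₀
  simp only [mvSubst] at hsub
  have hqmem : q ∈ Finset.range (e₀ 0 + e₀ 1 + 1) := by
    rw [Finset.mem_range]; omega
  have key : ∀ k ∈ Finset.range (e₀ 0 + e₀ 1 + 1), k ≠ q →
      PowerSeries.coeff k g * MvPowerSeries.coeff e₀ (A ^ k)
        - PowerSeries.coeff k g * MvPowerSeries.coeff e₀ (B ^ k) = 0 := by
    intro k _ hkq
    by_cases hdvd : q ∣ k
    · obtain ⟨j, rfl⟩ := hdvd
      rcases j with _ | _ | j
      · rw [mul_zero, PowerSeries.coeff_zero_eq_constantCoeff_apply, hg0,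
          zero_mul, zero_mul, sub_self]
      · exact absurd (mul_one q) hkq
      · have hAB : MvPowerSeries.coeff e₀ (A ^ (q * (j + 2)))
            = MvPowerSeries.coeff e₀ (B ^ (q * (j + 2))) := by
          rw [pow_mul, pow_mul, ← hC, ← hD,
            show C ^ (j + 2) = C ^ (j + 1) * C from pow_succ C (j + 1),
            show D ^ (j + 2) = D ^ (j + 1) * D from pow_succ D (j + 1),
            MvPowerSeries.coeff_mul, MvPowerSeries.coeff_mul]
          refine Finset.sum_congr rfl fun x hx => ?_
          rw [Finset.HasAntidiagonal.mem_antidiagonal] at hx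
          by_cases hx2 : x.2 = 0
          · rw [hx2, MvPowerSeries.coeff_zero_eq_constantCoeff_apply,
              MvPowerSeries.coeff_zero_eq_constantCoeff_apply, hCc, hDc, mul_zero, mul_zero]
          by_cases hx1 : x.1 = 0
          · have hone : MvPowerSeries.coeff (0 : Fin 2 →₀ ℕ) (C ^ (j + 1)) = 0 := by
              rw [MvPowerSeries.coeff_zero_eq_constantCoeff_apply, map_pow, hCc,
                zero_pow (Nat.succ_ne_zero j)]
            have hone' : MvPowerSeries.coeff (0 : Fin 2 →₀ ℕ) (D ^ (j + 1)) = 0 := by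
              rw [MvPowerSeries.coeff_zero_eq_constantCoeff_apply, map_pow, hDc,
                zero_pow (Nat.succ_ne_zero j)]
            rw [hx1, hone, hone', zero_mul, zero_mul]
          · have h0 := DFunLike.congr_fun hx (0 : Fin 2)
            have h1 := DFunLike.congr_fun hx (1 : Fin 2)
            rw [Finsupp.add_apply] at h0 h1
            have hpos1 : 0 < x.1 0 + x.1 1 :=
              Nat.pos_of_ne_zero fun hz => hx1 (fin2_deg_zero x.1 hz)
            have hpos2 : 0 < x.2 0 + x.2 1 :=
              Nat.pos_of_ne_zero fun hz => hx2 (fin2_deg_zero x.2 hz)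
            have hc2 : MvPowerSeries.coeff x.2 C = MvPowerSeries.coeff x.2 D :=
              hmin x.2 (by omega)
            have hc1 : MvPowerSeries.coeff x.1 (C ^ (j + 1))
                = MvPowerSeries.coeff x.1 (D ^ (j + 1)) := by
              refine mv_agree_pow C D x.1 (fun u hu => hmin u ?_) (j + 1) x.1 le_rfl
              have hu0 : u 0 ≤ x.1 0 := hu 0
              have hu1 : u 1 ≤ x.1 1 := hu 1
              omega
            rw [hc1, hc2]
        rw [hAB, sub_self]
    · rw [hgvan k (hqdef ▸ hdvd), zero_mul, zero_mul, sub_self]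
  have hsing : ∑ k ∈ Finset.range (e₀ 0 + e₀ 1 + 1),
      (PowerSeries.coeff k g * MvPowerSeries.coeff e₀ (A ^ k)
        - PowerSeries.coeff k g * MvPowerSeries.coeff e₀ (B ^ k))
      = PowerSeries.coeff q g * MvPowerSeries.coeff e₀ (A ^ q)
        - PowerSeries.coeff q g * MvPowerSeries.coeff e₀ (B ^ q) :=
    Finset.sum_eq_single_of_mem q hqmem key
  rw [Finset.sum_sub_distrib, hsub, sub_self] at hsing
  have hfinal : PowerSeries.coeff q g
      * (MvPowerSeries.coeff e₀ (A ^ q) - MvPowerSeries.coeff e₀ (B ^ q)) = 0 := by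
    rw [mul_sub]; exact hsing.symm
  rcases mul_eq_zero.mp hfinal with hz | hz
  · exact hgd (hqdef ▸ hz)
  · exact he₀ (hC ▸ hD ▸ sub_eq_zero.mp hz)
end

section
/- Let F be a field of characteristic p > 0, let θ be an iterative derivation on F, and let d ∈ ℕ be such that θ^{(m)} is the zero map for every m ∈ ℕ not divisible by p^d. Define θ̄ : F → F⟦U⟧ by θ̄(x) := Σ_j θ^{(j·p^d)}(x)·U^j, i.e. θ̄^{(j)} := θ^{(j·p^d)}. Then θ̄ is an iterative derivation on F. -/
/-- One step of Lucas: `(n*p).choose (k*p) ≡ n.choose k [MOD p]`. -/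
lemma choose_mul_self_mod {p : ℕ} [Fact p.Prime] (n k : ℕ) :
    (n * p).choose (k * p) ≡ n.choose k [MOD p] := by
  have h := Choose.choose_modEq_choose_mod_mul_choose_div_nat (p := p) (n := n * p) (k := k * p)
  have hp : 0 < p := (Fact.out : p.Prime).pos
  simpa [Nat.mul_mod_left, Nat.mul_div_cancel _ hp] using h

lemma choose_mul_pow_mod {p : ℕ} [Fact p.Prime] (n k d : ℕ) :
    (n * p ^ d).choose (k * p ^ d) ≡ n.choose k [MOD p] := by
  induction d with
  | zero => simp [Nat.ModEq.refl]
  | succ d ih =>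
      have : n * p ^ (d + 1) = (n * p ^ d) * p := by ring
      rw [this, show k * p ^ (d + 1) = (k * p ^ d) * p by ring]
      exact (choose_mul_self_mod (n * p ^ d) (k * p ^ d)).trans ih

/-- If `θ⁽ᵐ⁾ = 0` for all `m` not divisible by `p^d`, then
`θ̄ : x ↦ Σ_j θ⁽ʲ·ᵖ^ᵈ⁾(x)·U^j`, i.e. `θ̄⁽ʲ⁾ := θ⁽ʲ·ᵖ^ᵈ⁾`, is again an iterative
derivation. -/
theorem untwisted_derivation_is_iterative
    {F : Type*} [Field F] (p : ℕ) (hp : 0 < p) [CharP F p]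
    (θ : F → PowerSeries F) (hθ : IsIterativeDerivation θ) (d : ℕ)
    (hvan : ∀ m : ℕ, ¬ (p ^ d ∣ m) → ∀ f : F, PowerSeries.coeff m (θ f) = 0) :
    IsIterativeDerivation
      (fun x => PowerSeries.mk fun j => PowerSeries.coeff (j * p ^ d) (θ x)) := by
  haveI : NeZero p := ⟨hp.ne'⟩
  have hprime : p.Prime := CharP.char_is_prime_of_pos F p |>.out
  haveI : Fact p.Prime := ⟨hprime⟩
  obtain ⟨h1, hadd, hmul, h0, hiter⟩ := hθ
  set q := p ^ d with hq
  have hq0 : 0 < q := pow_pos hp d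
  refine ⟨?_, ?_, ?_, ?_, ?_⟩
  · ext k
    simp only [PowerSeries.coeff_mk, h1, PowerSeries.coeff_one]
    rcases Nat.eq_zero_or_pos k with rfl | hk
    · simp
    · rw [if_neg (Nat.mul_pos hk hq0).ne', if_neg hk.ne']
  · intro a b
    ext k
    simp [hadd]
  · intro a b
    ext k
    simp only [PowerSeries.coeff_mk, hmul, PowerSeries.coeff_mul]
    have hsub : (Finset.HasAntidiagonal.antidiagonal k).image (fun x : ℕ × ℕ => (x.1 * q, x.2 * q)) ⊆
        Finset.HasAntidiagonal.antidiagonal (k * q) := by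
      intro x hx
      simp only [Finset.mem_image, Finset.HasAntidiagonal.mem_antidiagonal] at hx ⊢
      obtain ⟨y, hy, rfl⟩ := hx
      rw [← add_mul, hy]
    have hinj : ∀ x ∈ Finset.HasAntidiagonal.antidiagonal k, ∀ y ∈ Finset.HasAntidiagonal.antidiagonal k,
        (fun x : ℕ × ℕ => (x.1 * q, x.2 * q)) x = (fun x : ℕ × ℕ => (x.1 * q, x.2 * q)) y →
        x = y := by
      intro x _ y _ h
      simp only [Prod.mk.injEq] at h
      exact Prod.ext (Nat.eq_of_mul_eq_mul_right hq0 h.1) (Nat.eq_of_mul_eq_mul_right hq0 h.2)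
    have hzero : ∀ x ∈ Finset.HasAntidiagonal.antidiagonal (k * q),
        x ∉ (Finset.HasAntidiagonal.antidiagonal k).image (fun x : ℕ × ℕ => (x.1 * q, x.2 * q)) →
        PowerSeries.coeff x.1 (θ a) * PowerSeries.coeff x.2 (θ b) = 0 := by
      intro x hx hnx
      simp only [Finset.HasAntidiagonal.mem_antidiagonal] at hx
      by_cases hd1 : q ∣ x.1
      · obtain ⟨i, hi⟩ := hd1
        have hd2 : q ∣ x.2 := (Nat.dvd_add_right ⟨i, hi⟩).mp (hx ▸ dvd_mul_left q k)
        obtain ⟨j, hj⟩ := hd2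
        exfalso
        apply hnx
        simp only [Finset.mem_image, Finset.HasAntidiagonal.mem_antidiagonal]
        refine ⟨(i, j), ?_, ?_⟩
        · have hqk : q * (i + j) = q * k := by
            rw [Nat.mul_add, ← hi, ← hj, hx, mul_comm]
          exact Nat.eq_of_mul_eq_mul_left hq0 hqk
        · exact Prod.ext (by rw [hi, mul_comm q i]) (by rw [hj, mul_comm q j])
      · rw [hvan x.1 hd1 a, zero_mul]
    rw [← Finset.sum_subset hsub hzero, Finset.sum_image hinj]
  · intro r
    simpa using h0 r
  · intro i j r
    simp only [PowerSeries.coeff_mk]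
    have harith : i * q + j * q = (i + j) * q := by ring
    have hc : (((i * q + j * q).choose (i * q) : ℕ) : F) = (((i + j).choose i : ℕ) : F) := by
      have hl := choose_mul_pow_mod (i + j) i d (p := p)
      rw [add_mul] at hl
      exact (CharP.natCast_eq_natCast F p).mpr hl
    rw [hiter (i * q) (j * q) r, nsmul_eq_mul, nsmul_eq_mul, hc, harith]
end

section
/- Let F be a field of characteristic p > 0, let θ be an iterative derivation on F, let P ∈ F⟦T⟧ have constant coefficient 0 and nonzero coefficient of T^1, and suppose that θ̃ defined by θ̃(f) := PowerSeries.subst P (θ f) is again an iterative derivation on F. Then θ and θ̃ have the same constants: for every f ∈ F, θ(f) = C(f) if and only if θ̃(f) = C(f); i.e. F^θ = F^θ̃. -/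
lemma coeff_pow_eq_zero_of_lt {F : Type*} [CommRing F] {P : PowerSeries F}
    (hP0 : PowerSeries.constantCoeff P = 0) {k j : ℕ} (h : j < k) :
    PowerSeries.coeff j (P ^ k) = 0 := by
  have hdvd : (PowerSeries.X : PowerSeries F) ^ k ∣ P ^ k :=
    pow_dvd_pow_of_dvd (PowerSeries.X_dvd_iff.mpr hP0) k
  exact (PowerSeries.X_pow_dvd_iff.mp hdvd) j h

lemma coeff_pow_self {F : Type*} [CommRing F] {P : PowerSeries F}
    (hP0 : PowerSeries.constantCoeff P = 0) (n : ℕ) :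
    PowerSeries.coeff n (P ^ n) = (PowerSeries.coeff 1 P) ^ n := by
  induction n with
  | zero => simp
  | succ n ih =>
    rw [pow_succ, PowerSeries.coeff_mul]
    rw [Finset.sum_eq_single (n, 1)]
    · rw [ih, pow_succ]
    · rintro ⟨i, j⟩ hmem hne
      rw [Finset.HasAntidiagonal.mem_antidiagonal] at hmem
      rcases lt_or_ge i n with hi | hi
      · rw [coeff_pow_eq_zero_of_lt hP0 hi, zero_mul]
      · have : j = 0 ∨ (i = n ∧ j = 1) := by omega
        rcases this with hj | ⟨hi', hj⟩
        · subst hj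
          have : (PowerSeries.coeff 0) P = 0 := by rw [PowerSeries.coeff_zero_eq_constantCoeff]; exact hP0
          rw [this, mul_zero]
        · exact absurd (by simp [hi', hj]) hne
    · intro h
      exact absurd (Finset.HasAntidiagonal.mem_antidiagonal.mpr (by omega)) h

/-- Equivalent iterative derivations have the same constants: `F^θ = F^θ̃` for
`θ̃ = subst P ∘ θ` with `constantCoeff P = 0` and `coeff 1 P ≠ 0`. -/
theorem equivalent_derivations_same_constants
    {F : Type*} [Field F] (p : ℕ) (hp : 0 < p) [CharP F p]
    (θ : F → PowerSeries F) (hθ : IsIterativeDerivation θ)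
    (P : PowerSeries F) (hP0 : PowerSeries.constantCoeff P = 0)
    (hP1 : PowerSeries.coeff 1 P ≠ 0)
    (hθt : IsIterativeDerivation (fun f => psSubst P (θ f))) :
    ∀ f : F, θ f = PowerSeries.C f ↔ psSubst P (θ f) = PowerSeries.C f := by
  intro f
  constructor
  · intro h
    rw [h]
    ext n
    simp only [psSubst, PowerSeries.coeff_mk]
    rw [Finset.sum_eq_single 0]
    · simp [PowerSeries.coeff_C]
    · intro k hk hk0
      rw [PowerSeries.coeff_C, if_neg hk0, zero_mul]
    · intro h0
      exact absurd (Finset.mem_range.mpr (by omega)) h0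
  · intro h
    have hcoeff : ∀ n, ∑ k ∈ Finset.range (n + 1),
        PowerSeries.coeff k (θ f) * PowerSeries.coeff n (P ^ k) =
        PowerSeries.coeff n (PowerSeries.C f) := by
      intro n
      have := congrArg (PowerSeries.coeff n) h
      simpa [psSubst] using this
    have hzero : ∀ n, 1 ≤ n → PowerSeries.coeff n (θ f) = 0 := by
      intro n
      induction n using Nat.strong_induction_on with
      | _ n ih =>
        intro hn
        have hc := hcoeff n
        rw [PowerSeries.coeff_C, if_neg (by omega)] at hc
        rw [Finset.sum_eq_single n] at hc
        · rw [coeff_pow_self hP0] at hc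
          exact (mul_eq_zero.mp hc).resolve_right (pow_ne_zero n hP1)
        · intro k hk hkn
          have hk' : k < n := by
            rw [Finset.mem_range] at hk; omega
          rcases Nat.eq_zero_or_pos k with hk0 | hk1
          · subst hk0
            rw [pow_zero, PowerSeries.coeff_one, if_neg (by omega), mul_zero]
          · rw [ih k hk' hk1, zero_mul]
        · intro h0
          exact absurd (Finset.mem_range.mpr (by omega)) h0
    ext n
    rcases Nat.eq_zero_or_pos n with rfl | hn
    · rw [hθ.2.2.2.1 f, PowerSeries.coeff_C, if_pos rfl]
    · rw [hzero n hn, PowerSeries.coeff_C, if_neg (by omega)]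
end
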